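/- arXiv:2505.05171 — 3 statements merged into one kernel-verified Lean document; each statement's English description precedes it below -/
import Mathlib

section
/- For every n ≥ 1, the number of revised ascent sequences of length n avoiding the pattern 231 equals 2^{n−1} − n + 1. -/
/-!
In a revised ascent sequence avoiding 231 with maximum `m ≥ 2`, the leftmost occurrences at
positive positions are exactly the ascent bottoms there, and they appear in increasing order of
value (a later smaller one would complete a 231 with the ascent following the first). From this,
every repeated value is `m` or `m - 1`: it is `m` before the last occurrence `q` of `m` and `m - 1`
after it. So the sequence is determined by the set `S ⊆ {1, …, n-1}` of positive leftmost
occurrences together with `q`, the element of rank `k` in `S` carrying the value `k`. Conversely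
every such `S` with `#S ≥ 2` arises, and `S = ∅` stands for the constant sequence `1`; the subsets
of size `≠ 1` number `2^(n-1) - (n-1)`.
-/

/-- An endofunction of size `n`: values in `{1,…,n}` (indices are `Fin n`, 0-based). -/
def IsEndo (n : ℕ) (x : Fin n → ℕ) : Prop := ∀ i, 1 ≤ x i ∧ x i ≤ n

/-- The maximum value of `x`. -/
def maxVal (n : ℕ) (x : Fin n → ℕ) : ℕ := Finset.univ.sup x

/-- A Cayley permutation: an endofunction whose image is `{1,…,max x}`. -/
def IsCayley (n : ℕ) (x : Fin n → ℕ) : Prop :=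
  IsEndo n x ∧ ∀ v, 1 ≤ v → v ≤ maxVal n x → ∃ i, x i = v

/-- Ascent bottoms (0-based; index 0 always included). -/
def Ascbot (n : ℕ) (x : Fin n → ℕ) : Set (Fin n) :=
  {i | i.1 = 0 ∨ ∃ h : i.1 + 1 < n, x i < x ⟨i.1 + 1, h⟩}

/-- Indices of leftmost occurrences of values. -/
def Nub (n : ℕ) (x : Fin n → ℕ) : Set (Fin n) :=
  {i | ∀ j, j < i → x j ≠ x i}

/-- A revised ascent sequence. -/
def IsRAS (n : ℕ) (x : Fin n → ℕ) : Prop :=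
  IsCayley n x ∧ Ascbot n x = Nub n x

/-- `x` avoids the pattern `231`. -/
def Avoids231 (n : ℕ) (x : Fin n → ℕ) : Prop :=
  ¬ ∃ i j k : Fin n, i < j ∧ j < k ∧ x k < x i ∧ x i < x j

open Finset

namespace RevisedAscentSeq

variable {n : ℕ}

def rank (S : Finset (Fin n)) (i : Fin n) : ℕ := #{j ∈ S | j ≤ i}

section Rank

variable {S : Finset (Fin n)} {i j : Fin n}

lemma one_le_rank (hi : i ∈ S) : 1 ≤ rank S i :=
  card_pos.2 ⟨i, mem_filter.2 ⟨hi, le_rfl⟩⟩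

lemma rank_le_card (S : Finset (Fin n)) (i : Fin n) : rank S i ≤ #S :=
  card_filter_le _ _

lemma rank_lt_rank (hj : j ∈ S) (hij : i < j) : rank S i < rank S j := by
  refine card_lt_card ⟨fun k hk => ?_, fun h => ?_⟩
  · rw [mem_filter] at hk ⊢
    exact ⟨hk.1, hk.2.trans hij.le⟩
  · exact (mem_filter.1 (h (mem_filter.2 ⟨hj, le_rfl⟩))).2.not_gt hij

lemma rank_strictMonoOn : StrictMonoOn (rank S) S :=
  fun _ _ _ hj hij => rank_lt_rank hj hij

lemma rank_lt_card_iff : rank S i < #S ↔ ∃ j ∈ S, i < j := by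
  refine ⟨fun h => ?_, fun ⟨j, hj, hij⟩ => (rank_lt_rank hj hij).trans_le (rank_le_card S j)⟩
  by_contra! hle
  exact h.ne (congrArg card (filter_true_of_mem hle))

lemma image_rank : S.image (rank S) = Icc 1 #S := by
  refine eq_of_subset_of_card_le (fun v hv => ?_) ?_
  · obtain ⟨i, hi, rfl⟩ := mem_image.1 hv
    exact mem_Icc.2 ⟨one_le_rank hi, rank_le_card S i⟩
  · rw [card_image_of_injOn rank_strictMonoOn.injOn, Nat.card_Icc, Nat.add_sub_cancel]

lemma eq_rank_of_strictMonoOn {f : Fin n → ℕ} {k : ℕ} (hf : StrictMonoOn f S)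
    (himg : S.image f = Icc 1 k) (hi : i ∈ S) : f i = rank S i := by
  have hmem : ∀ {j}, j ∈ S → 1 ≤ f j ∧ f j ≤ k := fun hj =>
    mem_Icc.1 (himg ▸ mem_image_of_mem f hj)
  have himg_le : {j ∈ S | j ≤ i}.image f = Icc 1 (f i) := by
    ext v
    simp only [mem_image, mem_filter, mem_Icc]
    constructor
    · rintro ⟨j, ⟨hj, hji⟩, rfl⟩
      exact ⟨(hmem hj).1, hf.monotoneOn hj hi hji⟩
    · rintro ⟨h1, h2⟩
      have hv : v ∈ S.image f := himg ▸ mem_Icc.2 ⟨h1, h2.trans (hmem hi).2⟩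
      obtain ⟨j, hj, rfl⟩ := mem_image.1 hv
      exact ⟨j, ⟨hj, (hf.le_iff_le hj hi).1 h2⟩, rfl⟩
  rw [rank, ← card_image_of_injOn (hf.injOn.mono (filter_subset _ _)), himg_le,
    Nat.card_Icc, Nat.add_sub_cancel]

lemma rank_max' (hS : S.Nonempty) : rank S (S.max' hS) = #S :=
  (rank_le_card S _).antisymm <| not_lt.1 fun h =>
    let ⟨j, hj, hlt⟩ := rank_lt_card_iff.1 h
    (S.le_max' j hj).not_gt hlt

end Rank

section Nub

variable {x : Fin n → ℕ} {i : Fin n}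

lemma mem_nub_iff : i ∈ Nub n x ↔ ∀ j < i, x j ≠ x i := Iff.rfl

lemma mem_ascbot_iff :
    i ∈ Ascbot n x ↔ i.1 = 0 ∨ ∃ h : i.1 + 1 < n, x i < x ⟨i.1 + 1, h⟩ := Iff.rfl

end Nub

/-- The sequence encoded by `S ⊆ {1, …, n-1}`; the `max _ 1` makes `S = ∅` encode the constant
sequence `1`. -/
def ofFinset (S : Finset (Fin n)) (i : Fin n) : ℕ :=
  if i ∈ S then rank S i else if ∃ j ∈ S, i < j then #S else max (#S - 1) 1

section OfFinset

variable {S : Finset (Fin n)} {i j : Fin n}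

lemma ofFinset_of_mem (hi : i ∈ S) : ofFinset S i = rank S i := if_pos hi

lemma ofFinset_of_lt (hi : i ∉ S) (hj : j ∈ S) (hij : i < j) : ofFinset S i = #S := by
  rw [ofFinset, if_neg hi, if_pos ⟨j, hj, hij⟩]

lemma ofFinset_of_forall_le (hi : i ∉ S) (h : ∀ j ∈ S, j ≤ i) :
    ofFinset S i = max (#S - 1) 1 := by
  rw [ofFinset, if_neg hi, if_neg]
  rintro ⟨j, hj, hij⟩
  exact (h j hj).not_gt hij

lemma ofFinset_empty : ofFinset (∅ : Finset (Fin n)) = fun _ => 1 := by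
  funext i
  simp [ofFinset]

lemma one_le_ofFinset (S : Finset (Fin n)) (i : Fin n) : 1 ≤ ofFinset S i := by
  unfold ofFinset
  split_ifs with hi h
  · exact one_le_rank hi
  · obtain ⟨j, hj, -⟩ := h
    exact card_pos.2 ⟨j, hj⟩
  · exact le_max_right _ _

lemma ofFinset_le_card (hS : S.Nonempty) (i : Fin n) : ofFinset S i ≤ #S := by
  have := hS.card_pos
  unfold ofFinset
  split_ifs
  · exact rank_le_card S i
  · exact le_rfl
  · omega

lemma ofFinset_of_val_eq_zero (h0 : ∀ j ∈ S, 0 < j.1) (hS : S.Nonempty) (hi : i.1 = 0) :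
    ofFinset S i = #S := by
  obtain ⟨j, hj⟩ := hS
  exact ofFinset_of_lt (fun h => (h0 i h).ne' hi) hj (Fin.lt_def.2 (hi ▸ h0 j hj))

lemma avoids231_ofFinset (S : Finset (Fin n)) : Avoids231 n (ofFinset S) := by
  rintro ⟨i, j, k, hij, hjk, hki, hij'⟩
  have hS : S.Nonempty := by
    by_contra hS
    simp [not_nonempty_iff_eq_empty.1 hS, ofFinset_empty] at hij'
  have hj := ofFinset_le_card hS j
  by_cases hiS : i ∈ S
  · rw [ofFinset_of_mem hiS] at hki hij'
    by_cases hkS : k ∈ S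
    · rw [ofFinset_of_mem hkS] at hki
      exact hki.not_gt (rank_lt_rank hkS (hij.trans hjk))
    · unfold ofFinset at hki
      split_ifs at hki <;> omega
  · by_cases h : ∃ l ∈ S, i < l
    · obtain ⟨l, hl, hil⟩ := h
      rw [ofFinset_of_lt hiS hl hil] at hij'
      omega
    · push Not at h
      have hjS : j ∉ S := fun hjS => (h j hjS).not_gt hij
      rw [ofFinset_of_forall_le hiS h, ofFinset_of_forall_le hjS
        fun l hl => (h l hl).trans hij.le] at hij'
      exact hij'.false

lemma isRAS_const_one : IsRAS n fun _ => 1 := by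
  refine ⟨⟨fun i => ⟨le_rfl, i.pos⟩, fun v hv1 hv2 => ?_⟩, ?_⟩
  · have hmax : maxVal n (fun _ => 1) ≤ 1 := Finset.sup_le fun _ _ => le_rfl
    rcases isEmpty_or_nonempty (Fin n) with h | ⟨⟨i⟩⟩
    · simp [maxVal, univ_eq_empty] at hv2
      omega
    · exact ⟨i, show 1 = v by omega⟩
  · ext i
    simp only [Ascbot, Nub, Set.mem_ofPred_eq, lt_irrefl, exists_false, or_false, ne_eq,
      not_true_eq_false, imp_false, not_lt]
    exact ⟨fun h j => Fin.le_def.2 (by omega), fun h => Nat.le_zero.1 (h ⟨0, i.pos⟩)⟩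

lemma mem_nub_ofFinset_iff (h0 : ∀ j ∈ S, 0 < j.1) (hS : 2 ≤ #S) :
    i ∈ Nub n (ofFinset S) ↔ i.1 = 0 ∨ (i ∈ S ∧ ∃ j ∈ S, i < j) := by
  have hne : S.Nonempty := card_pos.1 (by omega)
  rw [mem_nub_iff]
  constructor
  · intro hnub
    rw [or_iff_not_imp_left]
    intro hi0
    have hval : ofFinset S i ≠ #S := fun h =>
      hnub ⟨0, i.pos⟩ (Fin.lt_def.2 (Nat.pos_of_ne_zero hi0))
        (by rw [h, ofFinset_of_val_eq_zero h0 hne rfl])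
    by_cases hiS : i ∈ S
    · rw [ofFinset_of_mem hiS] at hval
      exact ⟨hiS, rank_lt_card_iff.1 ((rank_le_card S i).lt_of_ne hval)⟩
    by_cases h : ∃ j ∈ S, i < j
    · obtain ⟨j, hj, hij⟩ := h
      exact absurd (ofFinset_of_lt hiS hj hij) hval
    push Not at h
    -- the value `#S - 1` after `max S` already occurs inside `S`
    obtain ⟨k, hk, hrk⟩ : ∃ k ∈ S, rank S k = #S - 1 :=
      mem_image.1 (image_rank ▸ mem_Icc.2 ⟨by omega, by omega⟩)
    refine absurd ?_ (hnub k ((h k hk).lt_of_ne fun e => hiS (e ▸ hk)))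
    rw [ofFinset_of_mem hk, hrk, ofFinset_of_forall_le hiS h]
    omega
  · rintro (hi0 | ⟨hiS, j, hj, hij⟩) k hki
    · exact absurd (Fin.lt_def.1 hki) (by omega)
    rw [ofFinset_of_mem hiS]
    by_cases hkS : k ∈ S
    · rw [ofFinset_of_mem hkS]
      exact (rank_lt_rank hiS hki).ne
    · rw [ofFinset_of_lt hkS hj (hki.trans hij)]
      exact (rank_lt_card_iff.2 ⟨j, hj, hij⟩).ne'

lemma mem_ascbot_ofFinset_iff (hS : 2 ≤ #S) :
    i ∈ Ascbot n (ofFinset S) ↔ i.1 = 0 ∨ (i ∈ S ∧ ∃ j ∈ S, i < j) := by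
  have hne : S.Nonempty := card_pos.1 (by omega)
  rw [mem_ascbot_iff]
  refine or_congr_right ⟨fun ⟨h, hlt⟩ => ?_, fun ⟨hiS, j, hj, hij⟩ => ?_⟩
  · have hle := ofFinset_le_card hne ⟨i.1 + 1, h⟩
    by_cases hiS : i ∈ S
    · rw [ofFinset_of_mem hiS] at hlt
      exact ⟨hiS, rank_lt_card_iff.1 (hlt.trans_le hle)⟩
    by_cases hup : ∃ j ∈ S, i < j
    · obtain ⟨j, hj, hij⟩ := hup
      rw [ofFinset_of_lt hiS hj hij] at hlt
      exact absurd hlt hle.not_gt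
    push Not at hup
    have hup' : ∀ j ∈ S, j ≤ ⟨i.1 + 1, h⟩ := fun j hj =>
      Fin.le_def.2 (by have := Fin.le_def.1 (hup j hj); simp only; omega)
    have hi'S : (⟨i.1 + 1, h⟩ : Fin n) ∉ S := fun h' =>
      absurd (Fin.le_def.1 (hup _ h')) (by simp only; omega)
    rw [ofFinset_of_forall_le hiS hup, ofFinset_of_forall_le hi'S hup'] at hlt
    exact absurd hlt (lt_irrefl _)
  · have hij' := Fin.lt_def.1 hij
    have h : i.1 + 1 < n := by omega
    refine ⟨h, ?_⟩
    rw [ofFinset_of_mem hiS]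
    by_cases hi'S : (⟨i.1 + 1, h⟩ : Fin n) ∈ S
    · rw [ofFinset_of_mem hi'S]
      exact rank_lt_rank hi'S (Fin.lt_def.2 (by simp only; omega))
    · have hi'j : (⟨i.1 + 1, h⟩ : Fin n) < j :=
        (Fin.le_def.2 (by simp only; omega)).lt_of_ne fun e => hi'S (e ▸ hj)
      rw [ofFinset_of_lt hi'S hj hi'j]
      exact rank_lt_card_iff.2 ⟨j, hj, hij⟩

lemma isRAS_ofFinset (h0 : ∀ j ∈ S, 0 < j.1) (hS : #S ≠ 1) : IsRAS n (ofFinset S) := by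
  rcases S.eq_empty_or_nonempty with rfl | hne
  · rw [ofFinset_empty]
    exact isRAS_const_one
  have h2 : 2 ≤ #S := by have := hne.card_pos; omega
  refine ⟨⟨fun i => ⟨one_le_ofFinset S i, (ofFinset_le_card hne i).trans (card_finset_fin_le S)⟩,
    fun v hv1 hv2 => ?_⟩,
    Set.ext fun i => by rw [mem_ascbot_ofFinset_iff h2, mem_nub_ofFinset_iff h0 h2]⟩
  have hv : v ≤ #S := hv2.trans (Finset.sup_le fun i _ => ofFinset_le_card hne i)
  obtain ⟨i, hi, rfl⟩ := mem_image.1 (image_rank ▸ mem_Icc.2 ⟨hv1, hv⟩ : v ∈ S.image (rank S))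
  exact ⟨i, ofFinset_of_mem hi⟩

lemma ofFinset_ne_const_one (hS : S.Nonempty) (hS1 : #S ≠ 1) : ofFinset S ≠ fun _ => 1 := by
  intro h
  have := congrFun h (S.max' hS)
  rw [ofFinset_of_mem (S.max'_mem hS), rank_max'] at this
  exact hS1 this

lemma mem_iff_eq_max'_or_mem_nub (h0 : ∀ j ∈ S, 0 < j.1) (hS : 2 ≤ #S) (hne : S.Nonempty) :
    i ∈ S ↔ i = S.max' hne ∨ (i.1 ≠ 0 ∧ i ∈ Nub n (ofFinset S)) := by
  rw [mem_nub_ofFinset_iff h0 hS]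
  constructor
  · intro hi
    by_cases hmax : i = S.max' hne
    · exact Or.inl hmax
    · exact Or.inr ⟨(h0 i hi).ne', Or.inr ⟨hi, _, S.max'_mem hne,
        (S.le_max' i hi).lt_of_ne hmax⟩⟩
  · rintro (rfl | ⟨hi0, hi0' | ⟨hi, -⟩⟩)
    exacts [S.max'_mem hne, absurd hi0' hi0, hi]

lemma max'_le_of_ofFinset_eq {T : Finset (Fin n)} (hS : S.Nonempty) (hT : T.Nonempty)
    (h : ofFinset S = ofFinset T) (hcard : #S = #T) (h2 : 2 ≤ #S) : S.max' hS ≤ T.max' hT := by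
  by_contra! hlt
  have := congrFun h (S.max' hS)
  rw [ofFinset_of_mem (S.max'_mem hS), rank_max', ofFinset_of_forall_le
    (fun hm => (T.le_max' _ hm).not_gt hlt) fun j hj => (T.le_max' j hj).trans hlt.le] at this
  omega

lemma ofFinset_injOn :
    Set.InjOn ofFinset {S : Finset (Fin n) | (∀ j ∈ S, 0 < j.1) ∧ #S ≠ 1} := by
  rintro S ⟨hS0, hS1⟩ T ⟨hT0, hT1⟩ h
  rcases S.eq_empty_or_nonempty with rfl | hS <;> rcases T.eq_empty_or_nonempty with rfl | hT
  · rfl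
  · exact absurd (h.symm.trans ofFinset_empty) (ofFinset_ne_const_one hT hT1)
  · exact absurd (h.trans ofFinset_empty) (ofFinset_ne_const_one hS hS1)
  have hS2 : 2 ≤ #S := by have := hS.card_pos; omega
  have hT2 : 2 ≤ #T := by have := hT.card_pos; omega
  obtain ⟨j, -⟩ := id hS
  have hcard : #S = #T := by
    have := congrFun h ⟨0, j.pos⟩
    rwa [ofFinset_of_val_eq_zero hS0 hS rfl, ofFinset_of_val_eq_zero hT0 hT rfl] at this
  have hmax : S.max' hS = T.max' hT := (max'_le_of_ofFinset_eq hS hT h hcard hS2).antisymm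
    (max'_le_of_ofFinset_eq hT hS h.symm hcard.symm hT2)
  ext i
  rw [mem_iff_eq_max'_or_mem_nub hS0 hS2 hS, mem_iff_eq_max'_or_mem_nub hT0 hT2 hT, h, hmax]

end OfFinset

section Structure

variable {x : Fin n → ℕ} {i j q : Fin n}

lemma apply_le_maxVal (x : Fin n → ℕ) (i : Fin n) : x i ≤ maxVal n x := le_sup (mem_univ i)

lemma exists_mem_nub_le_eq (j : Fin n) : ∃ i ∈ Nub n x, i ≤ j ∧ x i = x j := by
  induction j using WellFoundedLT.induction with
  | _ j ih =>
    by_cases hj : j ∈ Nub n x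
    · exact ⟨j, hj, le_rfl, rfl⟩
    obtain ⟨k, hkj, hk⟩ : ∃ k < j, x k = x j := by simpa [mem_nub_iff] using hj
    obtain ⟨i, hi, hik, hxi⟩ := ih k hkj
    exact ⟨i, hi, hik.trans hkj.le, hxi.trans hk⟩

lemma exists_mem_nub_eq (hx : IsCayley n x) {v : ℕ} (hv1 : 1 ≤ v) (hv : v ≤ maxVal n x) :
    ∃ i ∈ Nub n x, x i = v := by
  obtain ⟨j, rfl⟩ := hx.2 v hv1 hv
  obtain ⟨i, hi, -, hij⟩ := exists_mem_nub_le_eq (x := x) j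
  exact ⟨i, hi, hij⟩

section AscbotEqNub

variable (hAN : Ascbot n x = Nub n x)
include hAN

lemma exists_succ_gt_of_mem_nub (hi : i ∈ Nub n x) (hi0 : i.1 ≠ 0) :
    ∃ j : Fin n, j.1 = i.1 + 1 ∧ x i < x j := by
  rw [← hAN, mem_ascbot_iff] at hi
  obtain hi | ⟨h, hlt⟩ := hi
  · exact absurd hi hi0
  · exact ⟨_, rfl, hlt⟩

lemma mem_nub_of_succ_gt (hij : j.1 = i.1 + 1) (hlt : x i < x j) : i ∈ Nub n x := by
  have h : i.1 + 1 < n := hij ▸ j.2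
  rw [← hAN, mem_ascbot_iff]
  exact Or.inr ⟨h, by rwa [show (⟨i.1 + 1, h⟩ : Fin n) = j from Fin.ext hij.symm]⟩

lemma apply_lt_maxVal_of_mem_nub (hi : i ∈ Nub n x) (hi0 : i.1 ≠ 0) : x i < maxVal n x :=
  let ⟨j, _, hlt⟩ := exists_succ_gt_of_mem_nub hAN hi hi0
  hlt.trans_le (apply_le_maxVal x j)

lemma apply_eq_maxVal_of_val_eq_zero (hi : i.1 = 0) : x i = maxVal n x := by
  obtain ⟨j, -, hj⟩ := exists_mem_eq_sup univ ⟨i, mem_univ i⟩ x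
  obtain ⟨k, hk, -, hkj⟩ := exists_mem_nub_le_eq (x := x) j
  have hk0 : k.1 = 0 := by
    by_contra hk0
    have := apply_lt_maxVal_of_mem_nub hAN hk hk0
    rw [hkj] at this
    exact this.ne hj.symm
  rw [← Fin.ext (hk0.trans hi.symm), hkj]
  exact hj.symm

lemma val_ne_zero_of_lt_maxVal (hi : x i < maxVal n x) : i.1 ≠ 0 := fun h =>
  hi.ne (apply_eq_maxVal_of_val_eq_zero hAN h)

/-- If the value rises from `i` to `j`, take the last `t ∈ [i, j)` with `x t ≤ x i`:
it is an ascent bottom, hence a leftmost occurrence. -/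
lemma exists_mem_nub_between (hij : i < j) (hlt : x i < x j) :
    ∃ t ∈ Nub n x, i ≤ t ∧ t < j ∧ x t ≤ x i := by
  classical
  obtain ⟨t, ht, htmax⟩ := ({t | i ≤ t ∧ t < j ∧ x t ≤ x i} : Finset (Fin n)).exists_max_image id
    ⟨i, by simp [hij]⟩
  simp only [mem_filter, mem_univ, true_and, id] at ht htmax
  obtain ⟨hit, htj, hti⟩ := ht
  have htj' := Fin.lt_def.1 htj
  have h : t.1 + 1 < n := by omega
  refine ⟨t, mem_nub_of_succ_gt hAN (j := ⟨t.1 + 1, h⟩) rfl ?_, hit, htj, hti⟩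
  refine hti.trans_lt (not_le.1 fun hle => ?_)
  rcases (Fin.le_def.2 (by simp only; omega) : (⟨t.1 + 1, h⟩ : Fin n) ≤ j).lt_or_eq with hlt' | heq
  · have := Fin.le_def.1 (htmax _ ⟨hit.trans (Fin.le_def.2 (by simp only; omega)), hlt', hle⟩)
    simp only at this
    omega
  · rw [heq] at hle
    exact hle.not_gt hlt

variable (hav : Avoids231 n x)
include hav

lemma apply_lt_apply_of_mem_nub (hi : i ∈ Nub n x) (hj : j ∈ Nub n x) (hi0 : i.1 ≠ 0)
    (hij : i < j) : x i < x j := by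
  refine (hj i hij).lt_or_gt.resolve_right fun hgt => ?_
  obtain ⟨k, hk, hlt⟩ := exists_succ_gt_of_mem_nub hAN hi hi0
  have hij' := Fin.lt_def.1 hij
  rcases (Fin.le_def.2 (by omega) : k ≤ j).lt_or_eq with hkj | rfl
  · exact hav ⟨i, k, j, Fin.lt_def.2 (by omega), hkj, hgt, hlt⟩
  · exact hlt.not_gt hgt

lemma apply_le_of_notMem_nub (hi : i ∉ Nub n x) (him : x i < maxVal n x) (hij : i < j) :
    x j ≤ x i := by
  by_contra! hlt
  obtain ⟨t, ht, hit, -, hti⟩ := exists_mem_nub_between hAN hij hlt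
  obtain ⟨k, hki, hk⟩ : ∃ k < i, x k = x i := by simpa [mem_nub_iff] using hi
  obtain ⟨f, hf, hfk, hfi⟩ := exists_mem_nub_le_eq (x := x) k
  have hf0 := val_ne_zero_of_lt_maxVal hAN (hfi.trans hk ▸ him)
  have := apply_lt_apply_of_mem_nub hAN hav hf ht hf0 (hfk.trans_lt (hki.trans_le hit))
  omega

end AscbotEqNub

section IsRAS

variable (hx : IsRAS n x) (hav : Avoids231 n x)
include hx hav

lemma maxVal_le_apply_add_one_of_notMem_nub (hi : i ∉ Nub n x) : maxVal n x ≤ x i + 1 := by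
  by_contra! hlt
  obtain ⟨p, hp, hpv⟩ := exists_mem_nub_eq hx.1 (v := x i + 1) (by omega) hlt.le
  have hp0 := val_ne_zero_of_lt_maxVal hx.2 (hpv ▸ hlt)
  obtain ⟨k, hkp, hpk⟩ := exists_succ_gt_of_mem_nub hx.2 hp hp0
  rcases lt_or_gt_of_ne (show i ≠ p by rintro rfl; omega) with hip | hpi
  · have := apply_le_of_notMem_nub hx.2 hav hi (by omega) hip
    omega
  · have hpi' := Fin.lt_def.1 hpi
    have hki : k < i := (Fin.le_def.2 (by omega) : k ≤ i).lt_of_ne (by rintro rfl; omega)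
    exact hav ⟨p, k, i, Fin.lt_def.2 (by omega), hki, by omega, hpk⟩

variable (hq : IsGreatest {j | x j = maxVal n x} q)
include hq

/-- The leftmost occurrence of `maxVal - 1` is followed by `maxVal`, so it lies before `q`,
and every positive leftmost occurrence lies before it. -/
lemma lt_of_mem_nub_of_isGreatest (h2 : 2 ≤ maxVal n x) (hi : i ∈ Nub n x) (hi0 : i.1 ≠ 0) :
    i < q := by
  obtain ⟨p, hp, hpv⟩ := exists_mem_nub_eq hx.1 (v := maxVal n x - 1) (by omega) (by omega)
  have hp0 := val_ne_zero_of_lt_maxVal hx.2 (by omega : x p < maxVal n x)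
  obtain ⟨k, hkp, hpk⟩ := exists_succ_gt_of_mem_nub hx.2 hp hp0
  have hkq := Fin.le_def.1 (hq.2 (by have := apply_le_maxVal x k; omega : x k = maxVal n x))
  have hip : i ≤ p := not_lt.1 fun hpi => by
    have := apply_lt_apply_of_mem_nub hx.2 hav hp hi hp0 hpi
    have := apply_lt_maxVal_of_mem_nub hx.2 hi hi0
    omega
  exact Fin.lt_def.2 (by have := Fin.le_def.1 hip; omega)

lemma apply_eq_maxVal_of_lt (hiq : i < q) (hi : i ∉ Nub n x) : x i = maxVal n x := by
  have := maxVal_le_apply_add_one_of_notMem_nub hx hav hi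
  have := apply_le_maxVal x i
  by_contra hne
  have := apply_le_of_notMem_nub hx.2 hav hi (by omega) hiq
  rw [hq.1] at this
  omega

lemma apply_eq_maxVal_sub_one_of_gt (h2 : 2 ≤ maxVal n x) (hqi : q < i) :
    x i = maxVal n x - 1 := by
  have hi0 : i.1 ≠ 0 := by have := Fin.lt_def.1 hqi; omega
  have hi : i ∉ Nub n x := fun hi =>
    (lt_of_mem_nub_of_isGreatest hx hav hq h2 hi hi0).not_gt hqi
  have := maxVal_le_apply_add_one_of_notMem_nub hx hav hi
  have := apply_le_maxVal x i
  have hne : x i ≠ maxVal n x := fun h => (hq.2 h).not_gt hqi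
  omega

end IsRAS

open Classical in
noncomputable def posNub (x : Fin n → ℕ) : Finset (Fin n) := {i | i ∈ Nub n x ∧ i.1 ≠ 0}

lemma mem_posNub : i ∈ posNub x ↔ i ∈ Nub n x ∧ i.1 ≠ 0 := by
  simp [posNub]

lemma image_insert_posNub (hx : IsRAS n x) (hq : IsGreatest {j | x j = maxVal n x} q) :
    (insert q (posNub x)).image x = Icc 1 (maxVal n x) := by
  ext v
  simp only [mem_image, mem_insert, mem_Icc]
  constructor
  · rintro ⟨i, -, rfl⟩
    exact ⟨(hx.1.1 i).1, apply_le_maxVal x i⟩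
  · rintro ⟨hv1, hv⟩
    rcases hv.lt_or_eq with hv | rfl
    · obtain ⟨i, hi, rfl⟩ := exists_mem_nub_eq hx.1 hv1 hv.le
      exact ⟨i, Or.inr (mem_posNub.2 ⟨hi, val_ne_zero_of_lt_maxVal hx.2 hv⟩), rfl⟩
    · exact ⟨q, Or.inl rfl, hq.1⟩

section Decode

variable (hx : IsRAS n x) (hav : Avoids231 n x) (hq : IsGreatest {j | x j = maxVal n x} q)
  (h2 : 2 ≤ maxVal n x)
include hx hav hq h2

lemma strictMonoOn_insert_posNub : StrictMonoOn x ↑(insert q (posNub x)) := by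
  intro i hi j hj hij
  simp only [coe_insert, Set.mem_insert_iff, mem_coe, mem_posNub] at hi hj
  rcases hj with rfl | hj
  · rcases hi with rfl | hi
    · exact absurd hij (lt_irrefl _)
    · rw [hq.1]
      exact apply_lt_maxVal_of_mem_nub hx.2 hi.1 hi.2
  · rcases hi with rfl | hi
    · exact absurd (hij.trans (lt_of_mem_nub_of_isGreatest hx hav hq h2 hj.1 hj.2)) (lt_irrefl _)
    · exact apply_lt_apply_of_mem_nub hx.2 hav hi.1 hj.1 hi.2 hij

lemma card_insert_posNub : #(insert q (posNub x)) = maxVal n x := by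
  rw [← card_image_of_injOn (strictMonoOn_insert_posNub hx hav hq h2).injOn,
    image_insert_posNub hx hq, Nat.card_Icc, Nat.add_sub_cancel]

lemma ofFinset_insert_posNub : ofFinset (insert q (posNub x)) = x := by
  funext i
  by_cases hiS : i ∈ insert q (posNub x)
  · rw [ofFinset_of_mem hiS, eq_rank_of_strictMonoOn (strictMonoOn_insert_posNub hx hav hq h2)
      (image_insert_posNub hx hq) hiS]
  have hi : i ∉ Nub n x ∨ i.1 = 0 := by
    rw [mem_insert, mem_posNub] at hiS
    tauto
  rw [ofFinset, if_neg hiS, card_insert_posNub hx hav hq h2]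
  split_ifs with hup
  · obtain ⟨j, hj, hij⟩ := hup
    have hiq : i < q := by
      rcases mem_insert.1 hj with rfl | hj
      exacts [hij, hij.trans (lt_of_mem_nub_of_isGreatest hx hav hq h2 (mem_posNub.1 hj).1
        (mem_posNub.1 hj).2)]
    rcases hi with hi | hi0
    · exact (apply_eq_maxVal_of_lt hx hav hq hiq hi).symm
    · exact (apply_eq_maxVal_of_val_eq_zero hx.2 hi0).symm
  · push Not at hup
    have hqi : q < i := (hup q (mem_insert_self _ _)).lt_of_ne fun h =>
      hiS (h ▸ mem_insert_self _ _)
    rw [apply_eq_maxVal_sub_one_of_gt hx hav hq h2 hqi]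
    omega

end Decode

theorem exists_ofFinset_eq (hx : IsRAS n x) (hav : Avoids231 n x) :
    ∃ S : Finset (Fin n), (∀ j ∈ S, 0 < j.1) ∧ #S ≠ 1 ∧ ofFinset S = x := by
  by_cases h2 : maxVal n x < 2
  · refine ⟨∅, by simp, by simp, ?_⟩
    rw [ofFinset_empty]
    funext i
    have := (hx.1.1 i).1
    have := apply_le_maxVal x i
    omega
  push Not at h2
  obtain ⟨q, hq⟩ : ∃ q, IsGreatest {j | x j = maxVal n x} q := by
    classical
    obtain ⟨j, -, hj⟩ := exists_mem_nub_eq hx.1 (by omega) le_rfl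
    have hne : ({j | x j = maxVal n x} : Finset (Fin n)).Nonempty := ⟨j, by simpa using hj⟩
    exact ⟨_, by simpa using isGreatest_max' _ hne⟩
  -- a positive leftmost occurrence, e.g. that of the value `1`, lies before `q`
  have hq0 : 0 < q.1 := by
    obtain ⟨i, hi, hi1⟩ := exists_mem_nub_eq hx.1 le_rfl (by omega)
    have hi0 := val_ne_zero_of_lt_maxVal hx.2 (by omega : x i < maxVal n x)
    have := Fin.lt_def.1 (lt_of_mem_nub_of_isGreatest hx hav hq h2 hi hi0)
    omega
  refine ⟨insert q (posNub x), fun j hj => ?_, by rw [card_insert_posNub hx hav hq h2]; omega,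
    ofFinset_insert_posNub hx hav hq h2⟩
  rcases mem_insert.1 hj with rfl | hj
  exacts [hq0, Nat.pos_of_ne_zero (mem_posNub.1 hj).2]

end Structure

lemma card_powerset_filter_card_ne_one {α : Type*} (s : Finset α) :
    #{t ∈ s.powerset | #t ≠ 1} = 2 ^ #s - #s := by
  have := card_filter_add_card_filter_not (s := s.powerset) (fun t => #t = 1)
  rw [← powersetCard_eq_filter, card_powersetCard, Nat.choose_one_right, card_powerset] at this
  simp only [ne_eq]
  omega

lemma card_filter_val_pos : #{i : Fin n | 0 < i.1} = n - 1 := by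
  have := card_filter_add_card_filter_not (s := (univ : Finset (Fin n))) (fun i => i.1 < 1)
  rw [Fin.card_filter_val_lt, card_univ, Fintype.card_fin] at this
  simp only [not_lt, Nat.one_le_iff_ne_zero, ← Nat.pos_iff_ne_zero] at this
  omega

end RevisedAscentSeq

open RevisedAscentSeq in
theorem stmt13 (n : ℕ) (hn : 1 ≤ n) :
    {x : Fin n → ℕ | IsRAS n x ∧ Avoids231 n x}.ncard = 2 ^ (n - 1) - n + 1 := by
  classical
  set P : Finset (Finset (Fin n)) := {S ∈ ({i | 0 < i.1} : Finset (Fin n)).powerset | #S ≠ 1}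
  have hP : ∀ S, S ∈ P ↔ (∀ j ∈ S, 0 < j.1) ∧ #S ≠ 1 := fun S => by
    simp [P, subset_iff]
  have hset : {x : Fin n → ℕ | IsRAS n x ∧ Avoids231 n x} = P.image ofFinset := by
    ext x
    simp only [Set.mem_ofPred_eq, coe_image, Set.mem_image, mem_coe, hP]
    constructor
    · rintro ⟨hx, hav⟩
      obtain ⟨S, hS0, hS1, rfl⟩ := exists_ofFinset_eq hx hav
      exact ⟨S, ⟨hS0, hS1⟩, rfl⟩
    · rintro ⟨S, ⟨hS0, hS1⟩, rfl⟩
      exact ⟨isRAS_ofFinset hS0 hS1, avoids231_ofFinset S⟩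
  have hinj : Set.InjOn ofFinset ↑P := fun S hS T hT =>
    ofFinset_injOn ((hP S).1 hS) ((hP T).1 hT)
  rw [hset, Set.ncard_coe_finset, card_image_of_injOn hinj, card_powerset_filter_card_ne_one,
    card_filter_val_pos]
  have := Nat.lt_two_pow_self (n := n - 1)
  omega
end

section
/- For every n ≥ 2, the number of revised ascent sequences of length n avoiding the pattern 211 equals Σ_{k=1}^{n−1} k^{n−k−1}. -/
/-- `x` avoids the pattern `211`. -/
def Avoids211 (n : ℕ) (x : Fin n → ℕ) : Prop :=
  ¬ ∃ i j k : Fin n, i < j ∧ j < k ∧ x j < x i ∧ x j = x k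
open scoped Classical
namespace S16
variable {j : ℕ}

def lexlt (g : Fin j → ℕ) (w v : Fin j) : Prop := g w < g v ∨ (g w = g v ∧ w < v)

noncomputable def rk (g : Fin j → ℕ) (v : Fin j) : ℕ :=
  (Finset.univ.filter (fun w => lexlt g w v)).card

noncomputable def pp (g : Fin j → ℕ) (v : Fin j) : ℕ := 1 + g v + rk g v

lemma lexlt_irrefl (g : Fin j → ℕ) (v : Fin j) : ¬ lexlt g v v := by
  simp [lexlt]

lemma lexlt_trans {g : Fin j → ℕ} {u w v : Fin j} (h1 : lexlt g u w) (h2 : lexlt g w v) :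
    lexlt g u v := by
  rcases h1 with h1 | ⟨h1, h1'⟩ <;> rcases h2 with h2 | ⟨h2, h2'⟩
  · exact Or.inl (h1.trans h2)
  · exact Or.inl (h2 ▸ h1)
  · exact Or.inl (h1 ▸ h2)
  · exact Or.inr ⟨h1.trans h2, h1'.trans h2'⟩

lemma lexlt_total (g : Fin j → ℕ) {v w : Fin j} (h : v ≠ w) : lexlt g v w ∨ lexlt g w v := by
  rcases lt_trichotomy (g v) (g w) with h1 | h1 | h1
  · exact Or.inl (Or.inl h1)
  · rcases h.lt_or_gt with h2 | h2
    · exact Or.inl (Or.inr ⟨h1, h2⟩)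
    · exact Or.inr (Or.inr ⟨h1.symm, h2⟩)
  · exact Or.inr (Or.inl h1)

lemma lexlt_ne {g : Fin j → ℕ} {w v : Fin j} (h : lexlt g w v) : w ≠ v := by
  rintro rfl; exact lexlt_irrefl g _ h

lemma rk_lt_rk {g : Fin j → ℕ} {w v : Fin j} (h : lexlt g w v) : rk g w < rk g v := by
  have hsub : insert w (Finset.univ.filter (fun u => lexlt g u w)) ⊆
      Finset.univ.filter (fun u => lexlt g u v) := by
    intro u hu
    rcases Finset.mem_insert.1 hu with rfl | hu
    · simp [h]
    · simp only [Finset.mem_filter, Finset.mem_univ, true_and] at hu ⊢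
      exact lexlt_trans hu h
  have := Finset.card_le_card hsub
  rwa [Finset.card_insert_of_notMem (by simp [lexlt_irrefl])] at this

lemma glelex {g : Fin j → ℕ} {w v : Fin j} (h : lexlt g w v) : g w ≤ g v := by
  rcases h with h | ⟨h, _⟩; exact h.le; exact h.le

lemma pp_lt_pp {g : Fin j → ℕ} {w v : Fin j} (h : lexlt g w v) : pp g w < pp g v := by
  have := rk_lt_rk h; have := glelex h; unfold pp; omega

lemma pp_inj {g : Fin j → ℕ} {w v : Fin j} (h : pp g w = pp g v) : w = v := by
  by_contra hne
  rcases lexlt_total g hne with h1 | h1 <;> have := pp_lt_pp h1 <;> omega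

lemma lexlt_of_pp_lt {g : Fin j → ℕ} {w v : Fin j} (h : pp g w < pp g v) : lexlt g w v := by
  rcases eq_or_ne w v with rfl | hne
  · omega
  rcases lexlt_total g hne with h1 | h1
  · exact h1
  · have := pp_lt_pp h1; omega

lemma pp_succ {g : Fin j → ℕ} {v w : Fin j} (h : pp g w = pp g v + 1) : v < w := by
  have hl : lexlt g v w := lexlt_of_pp_lt (by omega)
  rcases hl with h1 | ⟨_, h1⟩
  · exfalso; have := rk_lt_rk (Or.inl h1 : lexlt g v w); unfold pp at h; omega
  · exact h1

lemma rk_add_one_le (g : Fin j → ℕ) (v : Fin j) : rk g v + 1 ≤ j := by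
  have : insert v (Finset.univ.filter (fun u => lexlt g u v)) ⊆ Finset.univ :=
    Finset.subset_univ _
  have := Finset.card_le_card this
  rw [Finset.card_insert_of_notMem (by simp [lexlt_irrefl]), Finset.card_univ,
    Fintype.card_fin] at this
  exact this

lemma pp_pos (g : Fin j → ℕ) (v : Fin j) : 1 ≤ pp g v := by unfold pp; omega


/-- card of indices below t in Fin n -/
lemma card_below {n : ℕ} (t : ℕ) (ht : t ≤ n) :
    (Finset.univ.filter (fun i : Fin n => i.1 < t)).card = t := by
  have : Finset.univ.filter (fun i : Fin n => i.1 < t) =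
      Finset.univ.map ⟨Fin.castLE ht, Fin.castLE_injective ht⟩ := by
    ext i
    simp only [Finset.mem_filter, Finset.mem_univ, true_and, Finset.mem_map,
      Function.Embedding.coeFn_mk]
    constructor
    · intro h; exact ⟨⟨i.1, h⟩, rfl⟩
    · rintro ⟨k, rfl⟩; exact k.2
  rw [this, Finset.card_map, Finset.card_univ, Fintype.card_fin]

noncomputable def Phi (n j : ℕ) (g : Fin j → ℕ) : Fin n → ℕ :=
  fun i => if h : ∃ v, pp g v = i.1 then h.choose.1 + 1 else j + 1

lemma Phi_pp {n j : ℕ} (g : Fin j → ℕ) (i : Fin n) (v : Fin j) (hiv : i.1 = pp g v) :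
    Phi n j g i = v.1 + 1 := by
  have hex : ∃ w, pp g w = i.1 := ⟨v, hiv.symm⟩
  rw [Phi, dif_pos hex]
  have := hex.choose_spec
  have : hex.choose = v := pp_inj (g := g) (by omega)
  rw [this]

lemma Phi_not {n j : ℕ} (g : Fin j → ℕ) (i : Fin n) (hnot : ∀ v, pp g v ≠ i.1) :
    Phi n j g i = j + 1 := by
  rw [Phi, dif_neg]; push_neg; exact hnot

def Good (n m : ℕ) (x : Fin n → ℕ) : Prop :=
  (∀ i : Fin n, i.1 = 0 → x i = m) ∧
  (∀ i : Fin n, i.1 = n - 1 → x i = m) ∧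
  (∀ i, 1 ≤ x i ∧ x i ≤ m) ∧
  (∀ i i' : Fin n, x i < m → x i = x i' → i = i') ∧
  (∀ v, 1 ≤ v → v < m → ∃ i, x i = v) ∧
  (∀ i : Fin n, ∀ h : i.1 + 1 < n, x i < m → x i < x ⟨i.1 + 1, h⟩)

lemma pp_le {n j : ℕ} (g : Fin j → ℕ) (hj : j + 2 ≤ n) (hg : ∀ v, g v + j + 2 ≤ n)
    (v : Fin j) : pp g v + 2 ≤ n := by
  have h1 := rk_add_one_le g v
  have h2 := hg v
  unfold pp; omega

lemma phi_good (n j : ℕ) (g : Fin j → ℕ) (hj : j + 2 ≤ n) (hg : ∀ v, g v + j + 2 ≤ n) :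
    Good n (j + 1) (Phi n j g) := by
  have hn : 2 ≤ n := by omega
  refine ⟨?_, ?_, ?_, ?_, ?_, ?_⟩
  · intro i hi
    refine Phi_not g i (fun v hv => ?_)
    have := pp_pos g v; omega
  · intro i hi
    refine Phi_not g i (fun v hv => ?_)
    have := pp_le g hj hg v; omega
  · intro i
    by_cases h : ∃ v, pp g v = i.1
    · obtain ⟨v, hv⟩ := h
      rw [Phi_pp g i v hv.symm]
      have := v.2; omega
    · push_neg at h; rw [Phi_not g i h]; omega
  · intro i i' hlt heq
    by_cases h : ∃ v, pp g v = i.1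
    · obtain ⟨v, hv⟩ := h
      rw [Phi_pp g i v hv.symm] at hlt heq
      by_cases h' : ∃ w, pp g w = i'.1
      · obtain ⟨w, hw⟩ := h'
        rw [Phi_pp g i' w hw.symm] at heq
        have : v = w := Fin.ext (by omega)
        subst this
        exact Fin.ext (by omega)
      · push_neg at h'; rw [Phi_not g i' h'] at heq
        have := v.2; omega
    · push_neg at h; rw [Phi_not g i h] at hlt; omega
  · intro v h1 h2
    have hvlt : v - 1 < j := by omega
    have hlt : pp g ⟨v - 1, hvlt⟩ < n := by have := pp_le g hj hg ⟨v - 1, hvlt⟩; omega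
    refine ⟨⟨pp g ⟨v - 1, hvlt⟩, hlt⟩, ?_⟩
    rw [Phi_pp g _ ⟨v - 1, hvlt⟩ rfl]
    simp; omega
  · intro i h hlt
    by_cases hex : ∃ v, pp g v = i.1
    · obtain ⟨v, hv⟩ := hex
      rw [Phi_pp g i v hv.symm]
      by_cases hex' : ∃ w, pp g w = i.1 + 1
      · obtain ⟨w, hw⟩ := hex'
        rw [Phi_pp g _ w (by simp [hw.symm])]
        have : v < w := pp_succ (g := g) (by omega)
        omega
      · push_neg at hex'
        rw [Phi_not g _ (by simpa using hex')]
        have := v.2; omega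
    · push_neg at hex; rw [Phi_not g i hex] at hlt; omega


noncomputable def gof (n j : ℕ) (x : Fin n → ℕ) (v : Fin j) : ℕ :=
  (Finset.univ.filter
    (fun i : Fin n => x i = j + 1 ∧ ∃ i' : Fin n, i < i' ∧ x i' = v.1 + 1)).card - 1

lemma Phi_eq_iff {n j : ℕ} (g : Fin j → ℕ) (i : Fin n) (v : Fin j) :
    Phi n j g i = v.1 + 1 ↔ i.1 = pp g v := by
  constructor
  · intro h
    by_cases hex : ∃ w, pp g w = i.1
    · obtain ⟨w, hw⟩ := hex
      rw [Phi_pp g i w hw.symm] at h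
      have hwv : w = v := Fin.ext (by omega)
      subst hwv; omega
    · push_neg at hex
      rw [Phi_not g i hex] at h
      have := v.2; omega
  · intro h; exact Phi_pp g i v h

lemma small_count {n j : ℕ} (g : Fin j → ℕ) (hj : j + 2 ≤ n) (hg : ∀ v, g v + j + 2 ≤ n)
    (v : Fin j) :
    (Finset.univ.filter (fun i : Fin n => i.1 < pp g v ∧ ¬ Phi n j g i = j + 1)).card
      = rk g v := by
  rw [rk]
  refine (Finset.card_bij (fun w _ => (⟨pp g w, by have := pp_le g hj hg w; omega⟩ : Fin n))
    ?_ ?_ ?_).symm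
  · intro w hw
    simp only [Finset.mem_filter, Finset.mem_univ, true_and] at hw ⊢
    refine ⟨pp_lt_pp hw, ?_⟩
    rw [Phi_pp g _ w rfl]
    have := w.2; omega
  · intro w _ w' _ h
    exact pp_inj (g := g) (by simpa using congrArg Fin.val h)
  · intro i hi
    simp only [Finset.mem_filter, Finset.mem_univ, true_and] at hi
    obtain ⟨hlt, hne⟩ := hi
    by_cases hex : ∃ w, pp g w = i.1
    · obtain ⟨w, hw⟩ := hex
      refine ⟨w, ?_, Fin.ext (by simp [hw])⟩
      simp only [Finset.mem_filter, Finset.mem_univ, true_and]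
      exact lexlt_of_pp_lt (by omega)
    · push_neg at hex
      exact absurd (Phi_not g i hex) hne

lemma gof_phi {n j : ℕ} (g : Fin j → ℕ) (hj : j + 2 ≤ n) (hg : ∀ v, g v + j + 2 ≤ n)
    (v : Fin j) : gof n j (Phi n j g) v = g v := by
  rw [gof]
  have hset : (Finset.univ.filter
      (fun i : Fin n => Phi n j g i = j + 1 ∧ ∃ i' : Fin n, i < i' ∧ Phi n j g i' = v.1 + 1))
      = Finset.univ.filter (fun i : Fin n => i.1 < pp g v ∧ Phi n j g i = j + 1) := by
    ext i
    simp only [Finset.mem_filter, Finset.mem_univ, true_and]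
    constructor
    · rintro ⟨h1, i', hlt, h2⟩
      rw [Phi_eq_iff] at h2
      have hlt' : i.1 < i'.1 := hlt
      exact ⟨by omega, h1⟩
    · rintro ⟨h1, h2⟩
      refine ⟨h2, ⟨pp g v, by have := pp_le g hj hg v; omega⟩, ?_, ?_⟩
      · exact Fin.lt_def.mpr (by simpa using h1)
      · rw [Phi_eq_iff]
  rw [hset]
  have hpart := Finset.card_filter_add_card_filter_not
    (s := Finset.univ.filter (fun i : Fin n => i.1 < pp g v))
    (p := fun i : Fin n => Phi n j g i = j + 1)
  rw [card_below (pp g v) (by have := pp_le g hj hg v; omega)] at hpart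
  rw [Finset.filter_filter, Finset.filter_filter] at hpart
  rw [small_count g hj hg v] at hpart
  have : (Finset.univ.filter (fun i : Fin n => i.1 < pp g v ∧ Phi n j g i = j + 1)).card
      = pp g v - rk g v := by omega
  rw [this, pp]
  omega


noncomputable def cntf (n : ℕ) (x : Fin n → ℕ) (m t : ℕ) : ℕ :=
  (Finset.univ.filter (fun i : Fin n => i.1 < t ∧ x i = m)).card

lemma cntf_mono {n : ℕ} (x : Fin n → ℕ) (m : ℕ) {t t' : ℕ} (h : t ≤ t') :
    cntf n x m t ≤ cntf n x m t' := by
  apply Finset.card_le_card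
  intro i hi
  simp only [Finset.mem_filter, Finset.mem_univ, true_and] at hi ⊢
  exact ⟨by omega, hi.2⟩

lemma cntf_sep {n : ℕ} (x : Fin n → ℕ) (m : ℕ) {t : Fin n} {a b : ℕ}
    (h1 : a ≤ t.1) (h2 : t.1 < b) (h3 : x t = m) :
    cntf n x m a + 1 ≤ cntf n x m b := by
  have hsub : insert t (Finset.univ.filter (fun i : Fin n => i.1 < a ∧ x i = m)) ⊆
      Finset.univ.filter (fun i : Fin n => i.1 < b ∧ x i = m) := by
    intro i hi
    rcases Finset.mem_insert.1 hi with rfl | hi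
    · simp only [Finset.mem_filter, Finset.mem_univ, true_and]
      exact ⟨h2, h3⟩
    · simp only [Finset.mem_filter, Finset.mem_univ, true_and] at hi ⊢
      exact ⟨by omega, hi.2⟩
  have := Finset.card_le_card hsub
  rwa [Finset.card_insert_of_notMem (by
    simp only [Finset.mem_filter, Finset.mem_univ, true_and, not_and]
    intro h; omega)] at this


lemma good_eq_phi {n m : ℕ} (x : Fin n → ℕ) (hn : 2 ≤ n) (hm : 1 ≤ m) (hx : Good n m x) :
    m + 1 ≤ n ∧ (∀ v : Fin (m - 1), gof n (m - 1) x v + (m - 1) + 2 ≤ n) ∧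
      x = Phi n (m - 1) (gof n (m - 1) x) := by
  obtain ⟨h0, hlast, hbd, huni, hsur, hasc⟩ := hx
  set j := m - 1 with hjdef
  have hj1 : j + 1 = m := by omega
  -- positions of small values
  have hpos : ∀ v : Fin j, ∃ i : Fin n, x i = v.1 + 1 := by
    intro v; exact hsur (v.1 + 1) (by omega) (by have := v.2; omega)
  set pos : Fin j → Fin n := fun v => (hpos v).choose with hposdef
  have hxp : ∀ v, x (pos v) = v.1 + 1 := fun v => (hpos v).choose_spec
  have hsm : ∀ v : Fin j, x (pos v) < m := by
    intro v; rw [hxp v]; have := v.2; omega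
  have hup : ∀ (v : Fin j) (i : Fin n), x i = v.1 + 1 → i = pos v := by
    intro v i h
    exact huni i (pos v) (by rw [h]; have := v.2; omega) (by rw [h, hxp])
  have hzero : (0 : ℕ) < n := by omega
  have hlastlt : n - 1 < n := by omega
  have hx0 : x ⟨0, hzero⟩ = m := h0 _ rfl
  have hxl : x ⟨n - 1, hlastlt⟩ = m := hlast _ rfl
  have hp0 : ∀ v, (pos v).1 ≠ 0 := by
    intro v h
    have he : pos v = ⟨0, hzero⟩ := Fin.ext h
    have he2 := hxp v
    rw [he, hx0] at he2
    have := v.2; omega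
  have hpl : ∀ v, (pos v).1 ≠ n - 1 := by
    intro v h
    have he : pos v = ⟨n - 1, hlastlt⟩ := Fin.ext h
    have he2 := hxp v
    rw [he, hxl] at he2
    have := v.2; omega
  -- gap values
  set gval : Fin j → ℕ := fun v => cntf n x m (pos v).1 - 1 with hgvaldef
  have hcnt : ∀ v, cntf n x m (pos v).1 = gval v + 1 := by
    intro v
    have h1 : 1 ≤ cntf n x m (pos v).1 := by
      rw [cntf]
      refine Finset.card_pos.2 ⟨⟨0, hzero⟩, ?_⟩
      simp only [Finset.mem_filter, Finset.mem_univ, true_and]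
      exact ⟨by have := hp0 v; omega, hx0⟩
    simp only [hgvaldef]; omega
  -- chain lemma
  have hchain : ∀ (d : ℕ) (a : Fin n) (h : a.1 + d + 1 < n),
      (∀ t : Fin n, a.1 ≤ t.1 → t.1 < a.1 + d + 1 → x t < m) → x a < x ⟨a.1 + d + 1, h⟩ := by
    intro d
    induction d with
    | zero =>
      intro a h ht
      exact hasc a h (ht a le_rfl (by omega))
    | succ d ih =>
      intro a h ht
      have h1 : a.1 + d + 1 < n := by omega
      have step : x ⟨a.1 + d + 1, h1⟩ < x ⟨a.1 + d + 1 + 1, by omega⟩ :=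
        hasc ⟨a.1 + d + 1, h1⟩ (by change a.1 + d + 1 + 1 < n; omega) (ht ⟨a.1 + d + 1, h1⟩ (by change a.1 ≤ a.1 + d + 1; omega) (by change a.1 + d + 1 < a.1 + (d+1) + 1; omega))
      have h2 : x a < x ⟨a.1 + d + 1, h1⟩ := ih a h1 (fun t h2 h3 => ht t h2 (by omega))
      have : x ⟨a.1 + d + 1 + 1, by omega⟩ = x ⟨a.1 + (d + 1) + 1, h⟩ := by
        congr 1
      omega
  -- order lemma
  have hord : ∀ v w : Fin j, lexlt gval w v → (pos w).1 < (pos v).1 := by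
    intro v w hlex
    have hne : w ≠ v := lexlt_ne hlex
    have hpne : pos w ≠ pos v := by
      intro h
      have := hxp w; rw [h, hxp v] at this
      exact hne (Fin.ext (by omega))
    rcases lt_or_ge (pos w).1 (pos v).1 with h | h
    · exact h
    exfalso
    have hvw : (pos v).1 < (pos w).1 := by
      rcases lt_or_eq_of_le h with h' | h'
      · exact h'
      · exact absurd (Fin.ext h'.symm) hpne
    rcases hlex with hlt | ⟨heq, hltw⟩
    · have := cntf_mono x m (le_of_lt hvw)
      have := hcnt v; have := hcnt w
      omega
    · -- gval w = gval v, w < v, pos v < pos w : contradiction via chain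
      have hallsm : ∀ t : Fin n, (pos v).1 ≤ t.1 → t.1 < (pos w).1 → x t < m := by
        intro t h1 h2
        rcases lt_or_eq_of_le (hbd t).2 with h3 | h3
        · exact h3
        · exfalso
          have := cntf_sep x m h1 h2 h3
          have := hcnt v; have := hcnt w
          omega
      have hd : (pos v).1 + ((pos w).1 - (pos v).1 - 1) + 1 = (pos w).1 := by omega
      have hlt2 : (pos v).1 + ((pos w).1 - (pos v).1 - 1) + 1 < n := by
        rw [hd]; exact (pos w).2
      have := hchain ((pos w).1 - (pos v).1 - 1) (pos v) hlt2
        (fun t ht1 ht2 => hallsm t ht1 (by omega))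
      have heqpos : (⟨(pos v).1 + ((pos w).1 - (pos v).1 - 1) + 1, hlt2⟩ : Fin n) = pos w :=
        Fin.ext (by simp [hd])
      rw [heqpos] at this
      rw [hxp v, hxp w] at this
      have : w.1 < v.1 := hltw
      omega
  have hord2 : ∀ v w : Fin j, (pos w).1 < (pos v).1 → lexlt gval w v := by
    intro v w h
    have hne : w ≠ v := by
      intro e; rw [e] at h; omega
    rcases lexlt_total gval hne with h1 | h1
    · exact h1
    · have := hord w v h1; omega
  -- rk relation
  have hrk : ∀ v : Fin j, rk gval v =
      (Finset.univ.filter (fun i : Fin n => i.1 < (pos v).1 ∧ x i < m)).card := by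
    intro v
    rw [rk]
    refine Finset.card_bij (fun w _ => pos w) ?_ ?_ ?_
    · intro w hw
      simp only [Finset.mem_filter, Finset.mem_univ, true_and] at hw ⊢
      exact ⟨hord v w hw, hsm w⟩
    · intro w _ w' _ h
      have h' : pos w = pos w' := h
      have e1 := hxp w
      rw [h', hxp w'] at e1
      exact Fin.ext (by omega)
    · intro i hi
      simp only [Finset.mem_filter, Finset.mem_univ, true_and] at hi
      obtain ⟨hlt, hsmall⟩ := hi
      have h1 : 1 ≤ x i := (hbd i).1
      refine ⟨⟨x i - 1, by omega⟩, ?_, ?_⟩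
      · simp only [Finset.mem_filter, Finset.mem_univ, true_and]
        have : i = pos ⟨x i - 1, by omega⟩ := hup _ i (by simp; omega)
        exact hord2 v _ (by rw [← this]; exact hlt)
      · exact (hup _ i (by simp; omega)).symm
  -- position formula
  have hppf : ∀ v : Fin j, (pos v).1 = pp gval v := by
    intro v
    have hcb := card_below (n := n) (pos v).1 (le_of_lt (pos v).2)
    have hpart := Finset.card_filter_add_card_filter_not
      (s := Finset.univ.filter (fun i : Fin n => i.1 < (pos v).1))
      (p := fun i : Fin n => x i = m)
    rw [hcb, Finset.filter_filter, Finset.filter_filter] at hpart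
    have he1 : (Finset.univ.filter (fun i : Fin n => i.1 < (pos v).1 ∧ x i = m)).card
        = gval v + 1 := by rw [← cntf, hcnt]
    have he2 : Finset.univ.filter (fun i : Fin n => i.1 < (pos v).1 ∧ ¬ x i = m)
        = Finset.univ.filter (fun i : Fin n => i.1 < (pos v).1 ∧ x i < m) := by
      ext i
      simp only [Finset.mem_filter, Finset.mem_univ, true_and]
      have := (hbd i).2
      constructor
      · rintro ⟨a, b⟩; exact ⟨a, by omega⟩
      · rintro ⟨a, b⟩; exact ⟨a, by omega⟩
    rw [he1, he2, ← hrk v] at hpart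
    rw [pp]; omega
  -- count of smalls
  have hsmcard : (Finset.univ.filter (fun i : Fin n => x i < m)).card = j := by
    rw [← Fintype.card_fin j, ← Finset.card_univ]
    refine (Finset.card_bij (fun (w : Fin j) _ => pos w) ?_ ?_ ?_).symm
    · intro w _
      simp only [Finset.mem_filter, Finset.mem_univ, true_and]
      exact hsm w
    · intro w _ w' _ h
      have h' : pos w = pos w' := h
      have e1 := hxp w
      rw [h', hxp w'] at e1
      exact Fin.ext (by omega)
    · intro i hi
      simp only [Finset.mem_filter, Finset.mem_univ, true_and] at hi
      have h1 : 1 ≤ x i := (hbd i).1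
      exact ⟨⟨x i - 1, by omega⟩, Finset.mem_univ _, (hup _ i (by simp; omega)).symm⟩
  have hjn : j + 2 ≤ n := by
    have hsub : Finset.univ.filter (fun i : Fin n => x i < m) ⊆
        ((Finset.univ.erase ⟨0, hzero⟩).erase ⟨n - 1, hlastlt⟩) := by
      intro i hi
      simp only [Finset.mem_filter, Finset.mem_univ, true_and] at hi
      refine Finset.mem_erase.2 ⟨?_, Finset.mem_erase.2 ⟨?_, Finset.mem_univ _⟩⟩
      · intro e; rw [e, hxl] at hi; omega
      · intro e; rw [e, hx0] at hi; omega
    have hcard := Finset.card_le_card hsub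
    rw [hsmcard] at hcard
    have h1 : (⟨n - 1, hlastlt⟩ : Fin n) ∈ Finset.univ.erase ⟨0, hzero⟩ :=
      Finset.mem_erase.2 ⟨by intro e; have := congrArg Fin.val e; simp at this; omega,
        Finset.mem_univ _⟩
    rw [Finset.card_erase_of_mem h1, Finset.card_erase_of_mem (Finset.mem_univ _),
      Finset.card_univ, Fintype.card_fin] at hcard
    omega
  -- m-count and gval bound
  have hmcard : (Finset.univ.filter (fun i : Fin n => x i = m)).card = n - j := by
    have hpart := Finset.card_filter_add_card_filter_not
      (s := (Finset.univ : Finset (Fin n))) (p := fun i : Fin n => x i = m)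
    have he : Finset.univ.filter (fun i : Fin n => ¬ x i = m)
        = Finset.univ.filter (fun i : Fin n => x i < m) := by
      ext i
      simp only [Finset.mem_filter, Finset.mem_univ, true_and]
      have := (hbd i).2
      omega
    rw [he, hsmcard, Finset.card_univ, Fintype.card_fin] at hpart
    omega
  have hgb : ∀ v : Fin j, gval v + j + 2 ≤ n := by
    intro v
    have hsub : Finset.univ.filter (fun i : Fin n => i.1 < (pos v).1 ∧ x i = m) ⊆
        (Finset.univ.filter (fun i : Fin n => x i = m)).erase ⟨n - 1, hlastlt⟩ := by
      intro i hi
      simp only [Finset.mem_filter, Finset.mem_univ, true_and] at hi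
      refine Finset.mem_erase.2 ⟨?_, by
        simp only [Finset.mem_filter, Finset.mem_univ, true_and]; exact hi.2⟩
      intro e
      have h2 := hpl v
      have h3 := (pos v).2
      have := congrArg Fin.val e
      simp at this
      omega
    have hcard := Finset.card_le_card hsub
    rw [Finset.card_erase_of_mem (by
      simp only [Finset.mem_filter, Finset.mem_univ, true_and]; exact hxl), hmcard] at hcard
    have := hcnt v
    rw [cntf] at this
    omega
  -- gof equals gval
  have hgof : ∀ v : Fin j, gof n j x v = gval v := by
    intro v
    rw [gof]
    have hset : Finset.univ.filter
        (fun i : Fin n => x i = j + 1 ∧ ∃ i' : Fin n, i < i' ∧ x i' = v.1 + 1)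
        = Finset.univ.filter (fun i : Fin n => i.1 < (pos v).1 ∧ x i = m) := by
      ext i
      simp only [Finset.mem_filter, Finset.mem_univ, true_and]
      constructor
      · rintro ⟨h1, i', hlt, h2⟩
        have : i' = pos v := hup v i' h2
        subst this
        exact ⟨hlt, by omega⟩
      · rintro ⟨h1, h2⟩
        exact ⟨by omega, pos v, by exact Fin.lt_def.mpr h1, hxp v⟩
    rw [hset, ← cntf, hcnt]
    omega
  -- conclusion
  have hgof_fun : gof n j x = gval := funext hgof
  refine ⟨by omega, ?_, ?_⟩
  · intro v
    rw [hgof]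
    have := hgb v
    omega
  · rw [hgof_fun]
    funext i
    rcases lt_or_eq_of_le (hbd i).2 with h | h
    · have h1 : 1 ≤ x i := (hbd i).1
      set w : Fin j := ⟨x i - 1, by omega⟩ with hwdef
      have hiw : i = pos w := hup w i (by simp [hwdef]; omega)
      rw [Phi_pp gval i w (by rw [hiw]; exact hppf w)]
      simp [hwdef]; omega
    · rw [Phi_not gval i (by
        intro w hw
        have : i = pos w := Fin.ext (by rw [hppf w, hw])
        rw [this, hxp w] at h
        have := w.2
        omega)]
      omega

lemma char_forward {n : ℕ} (hn : 2 ≤ n) (x : Fin n → ℕ)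
    (h : IsRAS n x ∧ Avoids211 n x) :
    1 ≤ maxVal n x ∧ Good n (maxVal n x) x := by
  obtain ⟨⟨⟨hendo, hcay⟩, hAN⟩, hav⟩ := h
  set M := maxVal n x with hMdef
  have hzero : (0 : ℕ) < n := by omega
  have hle : ∀ i, x i ≤ M := fun i => Finset.le_sup (Finset.mem_univ i)
  obtain ⟨i0', -, hi0'⟩ := Finset.exists_mem_eq_sup (Finset.univ : Finset (Fin n))
    ⟨⟨0, by omega⟩, Finset.mem_univ _⟩ x
  have hMx : M = x i0' := by rw [hMdef, maxVal, hi0']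
  have hM1 : 1 ≤ M := by
    have := (hendo i0').1; omega
  have hANiff : ∀ i : Fin n, i ∈ Ascbot n x ↔ i ∈ Nub n x := fun i => by rw [hAN]
  -- step 1 : x at 0 is M
  have hx0 : ∀ i : Fin n, i.1 = 0 → x i = M := by
    intro i hi
    by_contra hne
    -- take least index attaining M
    have hne' : (Finset.univ.filter (fun i : Fin n => x i = M)).Nonempty :=
      ⟨i0', by simp only [Finset.mem_filter, Finset.mem_univ, true_and]; exact hMx.symm⟩
    set i0 := (Finset.univ.filter (fun i : Fin n => x i = M)).min' hne' with hi0def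
    have hmem := (Finset.univ.filter (fun i : Fin n => x i = M)).min'_mem hne'
    simp only [Finset.mem_filter, Finset.mem_univ, true_and] at hmem
    have hnub : i0 ∈ Nub n x := by
      intro jj hjj heq
      rw [hmem] at heq
      have : i0 ≤ jj := Finset.min'_le _ _ (by simp [heq])
      exact absurd hjj (by exact not_lt.2 this)
    have hasb := (hANiff i0).2 hnub
    rcases hasb with h1 | ⟨h1, h2⟩
    · -- i0.1 = 0 so i = i0, x i = M, contradiction with hne
      have : i = i0 := Fin.ext (by omega)
      rw [this] at hne
      exact hne hmem
    · have := hle ⟨i0.1 + 1, h1⟩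
      rw [hmem] at h2
      omega
  -- step 2 : uniqueness of small values
  have huniq : ∀ i i' : Fin n, x i < M → x i = x i' → i = i' := by
    intro i i' hlt heq
    rcases lt_trichotomy i i' with hc | hc | hc
    · exfalso
      have hi0 : (0 : ℕ) < i.1 := by
        rcases Nat.eq_zero_or_pos i.1 with h1 | h1
        · rw [hx0 i h1] at hlt; omega
        · exact h1
      exact hav ⟨⟨0, hzero⟩, i, i', by exact Fin.lt_def.mpr hi0, hc,
        by rw [hx0 ⟨0, hzero⟩ rfl]; omega, heq⟩
    · exact hc
    · exfalso
      have hlt' : x i' < M := by omega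
      have hi0 : (0 : ℕ) < i'.1 := by
        rcases Nat.eq_zero_or_pos i'.1 with h1 | h1
        · rw [hx0 i' h1] at hlt'; omega
        · exact h1
      exact hav ⟨⟨0, hzero⟩, i', i, by exact Fin.lt_def.mpr hi0, hc,
        by rw [hx0 ⟨0, hzero⟩ rfl]; omega, heq.symm⟩
  have hnub : ∀ i : Fin n, x i < M → i ∈ Nub n x := by
    intro i hlt jj hjj heq
    have : jj = i := huniq jj i (by omega) heq
    rw [this] at hjj
    exact lt_irrefl _ hjj
  refine ⟨hM1, hx0, ?_, fun i => ⟨(hendo i).1, hle i⟩, huniq, fun v h1 h2 => hcay v h1 (by omega),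
    ?_⟩
  · -- last position is M
    intro i hi
    by_contra hne
    have hlt : x i < M := by have := hle i; omega
    have hasb := (hANiff i).2 (hnub i hlt)
    rcases hasb with h1 | ⟨h1, h2⟩
    · omega
    · omega
  · -- ascent at small values
    intro i h hlt
    have hasb := (hANiff i).2 (hnub i hlt)
    rcases hasb with h1 | ⟨h1, h2⟩
    · rw [hx0 i h1] at hlt; omega
    · exact h2

lemma char_backward {n m : ℕ} (hn : 2 ≤ n) (hmn : m ≤ n) (hm : 1 ≤ m) (x : Fin n → ℕ)
    (hx : Good n m x) : IsRAS n x ∧ Avoids211 n x := by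
  obtain ⟨h0, hlast, hbd, huni, hsur, hasc⟩ := hx
  have hzero : (0 : ℕ) < n := by omega
  have hx0 : x ⟨0, hzero⟩ = m := h0 _ rfl
  have hM : maxVal n x = m := by
    apply le_antisymm
    · exact Finset.sup_le (fun i _ => (hbd i).2)
    · rw [← hx0]; exact Finset.le_sup (Finset.mem_univ _)
  have hendo : IsEndo n x := fun i => ⟨(hbd i).1, le_trans (hbd i).2 hmn⟩
  refine ⟨⟨⟨hendo, ?_⟩, ?_⟩, ?_⟩
  · intro v h1 h2
    rw [hM] at h2
    rcases lt_or_eq_of_le h2 with h3 | h3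
    · exact hsur v h1 h3
    · exact ⟨⟨0, hzero⟩, by rw [hx0, h3]⟩
  · ext i
    simp only [Ascbot, Nub, Set.mem_setOf_eq]
    constructor
    · rintro (h1 | ⟨h1, h2⟩)
      · intro jj hjj
        have : jj.1 < i.1 := hjj
        omega
      · intro jj hjj heq
        have hlt : x i < m := by have := hbd ⟨i.1 + 1, h1⟩; omega
        have : jj = i := huni jj i (by omega) heq
        rw [this] at hjj
        exact lt_irrefl _ hjj
    · intro hnb
      rcases Nat.eq_zero_or_pos i.1 with h1 | h1
      · exact Or.inl h1
      rcases lt_or_eq_of_le (hbd i).2 with hlt | heq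
      · -- small value: not at last position
        have hil : i.1 ≠ n - 1 := by
          intro e
          rw [hlast i e] at hlt
          omega
        have h2 : i.1 + 1 < n := by have := i.2; omega
        exact Or.inr ⟨h2, hasc i h2 hlt⟩
      · exfalso
        exact hnb ⟨0, hzero⟩ (Fin.lt_def.mpr h1) (by rw [hx0, heq])
  · rintro ⟨i, jj, k, h1, h2, h3, h4⟩
    have : x jj < m := by have := hbd i; omega
    have : jj = k := huni jj k this h4
    rw [this] at h2
    exact lt_irrefl _ h2


abbrev TT (n : ℕ) := Σ j : Fin (n - 1), (Fin j.1 → Fin (n - 1 - j.1))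

noncomputable def Phi' (n : ℕ) : TT n → (Fin n → ℕ) :=
  fun t => Phi n t.1.1 (fun v => (t.2 v).1)

lemma Phi'_inj (n : ℕ) (hn : 2 ≤ n) : Function.Injective (Phi' n) := by
  rintro ⟨j, h⟩ ⟨j', h'⟩ heq
  simp only [Phi'] at heq
  have hbj : j.1 + 2 ≤ n := by have := j.2; omega
  have hbj' : j'.1 + 2 ≤ n := by have := j'.2; omega
  have hb : ∀ v : Fin j.1, (fun v => (h v).1) v + j.1 + 2 ≤ n := by
    intro v; have := (h v).2; have := j.2; simp; omega
  have hb' : ∀ v : Fin j'.1, (fun v => (h' v).1) v + j'.1 + 2 ≤ n := by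
    intro v; have := (h' v).2; have := j'.2; simp; omega
  have e0 : j = j' := by
    have g1 := (phi_good n j.1 _ hbj hb).1 ⟨0, by omega⟩ rfl
    have g2 := (phi_good n j'.1 _ hbj' hb').1 ⟨0, by omega⟩ rfl
    rw [heq, g2] at g1
    exact Fin.ext (by omega)
  subst e0
  have e1 : h = h' := by
    funext v
    have r1 := gof_phi (fun v => (h v).1) hbj hb v
    have r2 := gof_phi (fun v => (h' v).1) hbj hb' v
    rw [heq] at r1
    rw [r2] at r1
    exact (Fin.ext r1).symm
  rw [e1]

lemma range_eq (n : ℕ) (hn : 2 ≤ n) :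
    Set.range (Phi' n) = {x : Fin n → ℕ | IsRAS n x ∧ Avoids211 n x} := by
  ext x
  constructor
  · rintro ⟨⟨j, h⟩, rfl⟩
    have hbj : j.1 + 2 ≤ n := by have := j.2; omega
    have hb : ∀ v : Fin j.1, (fun v => (h v).1) v + j.1 + 2 ≤ n := by
      intro v; have := (h v).2; have := j.2; simp; omega
    have hgood := phi_good n j.1 (fun v => (h v).1) hbj hb
    exact char_backward hn (by omega) (by omega) _ hgood
  · intro hx
    obtain ⟨hM1, hgood⟩ := char_forward hn x hx
    obtain ⟨hMn, hbnd, hxeq⟩ := good_eq_phi x hn hM1 hgood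
    set M := maxVal n x with hMdef
    refine ⟨⟨⟨M - 1, by omega⟩, fun v => ⟨gof n (M - 1) x v,
      by have h1 := hbnd v; change gof n (M - 1) x v < n - 1 - (M - 1); omega⟩⟩, ?_⟩
    exact hxeq.symm

theorem stmt16' (n : ℕ) (hn : 2 ≤ n) :
    {x : Fin n → ℕ | IsRAS n x ∧ Avoids211 n x}.ncard =
      ∑ k ∈ Finset.Icc 1 (n - 1), k ^ (n - k - 1) := by
  classical
  rw [← range_eq n hn, ← Set.image_univ, Set.ncard_image_of_injective _ (Phi'_inj n hn),
    Set.ncard_univ, Nat.card_eq_fintype_card]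
  have hcard : Fintype.card (TT n) = ∑ j : Fin (n - 1), (n - 1 - j.1) ^ j.1 := by
    rw [Fintype.card_sigma]
    congr 1
    funext j
    rw [Fintype.card_fun, Fintype.card_fin, Fintype.card_fin]
  rw [hcard, Fin.sum_univ_eq_sum_range (fun j => (n - 1 - j) ^ j) (n - 1)]
  refine Finset.sum_nbij' (i := fun j => n - 1 - j) (j := fun k => n - 1 - k) ?_ ?_ ?_ ?_ ?_
  · intro a ha
    simp only [Finset.mem_range] at ha
    simp only [Finset.mem_Icc]
    omega
  · intro a ha
    simp only [Finset.mem_Icc] at ha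
    simp only [Finset.mem_range]
    omega
  · intro a ha
    simp only [Finset.mem_range] at ha
    change n - 1 - (n - 1 - a) = a
    omega
  · intro a ha
    simp only [Finset.mem_Icc] at ha
    change n - 1 - (n - 1 - a) = a
    omega
  · intro a ha
    simp only [Finset.mem_range] at ha
    have he : n - (n - 1 - a) - 1 = a := by omega
    rw [he]

end S16

theorem stmt16 (n : ℕ) (hn : 2 ≤ n) :
    {x : Fin n → ℕ | IsRAS n x ∧ Avoids211 n x}.ncard =
      ∑ k ∈ Finset.Icc 1 (n - 1), k ^ (n - k - 1) := by
  exact S16.stmt16' n hn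
end

section
/- For every n ≥ 2, a revised ascent sequence of length n avoids the pattern 121 if and only if it avoids the pattern 211; consequently the number of 121-avoiding revised ascent sequences of length n equals Σ_{k=1}^{n−1} k^{n−k−1}. -/
def Avoids121 (n : ℕ) (x : Fin n → ℕ) : Prop :=
  ¬ ∃ i j k : Fin n, i < j ∧ j < k ∧ x i < x j ∧ x i = x k
/-!
In a revised ascent sequence the leftmost occurrence of the maximum `m` is an ascent bottom, which
forces it to be the first entry. Avoiding 121 forces every value `v < m` to occur only once (the
entry after its first occurrence is larger, so a later `v` would close a 121), and so does
avoiding 211 (the initial `m` followed by two `v`s is a 211). Once the values below `m` are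
unique, each is a leftmost occurrence, hence an ascent bottom. So both classes consist of the
sequences `m r₁ m r₂ … m rₙ₋ₘ m` whose increasing runs `rᵢ` together use each of `1, …, m - 1`
once, and all of these are revised ascent sequences avoiding both patterns. Such a sequence is
determined by the run containing each small value, so there are `(n - m) ^ (m - 1)` of them.
-/

open Finset

variable {n m : ℕ} {x : Fin n → ℕ}

structure IsRunSeq (n m : ℕ) (x : Fin n → ℕ) : Prop where
  one_le_apply : ∀ i, 1 ≤ x i
  apply_le : ∀ i, x i ≤ m
  apply_zero : ∀ i : Fin n, i.1 = 0 → x i = m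
  existsUnique : ∀ v, 1 ≤ v → v < m → ∃! i, x i = v
  ascent : ∀ i : Fin n, x i < m → ∃ h : i.1 + 1 < n, x i < x ⟨i.1 + 1, h⟩

lemma le_maxVal (x : Fin n → ℕ) (i : Fin n) : x i ≤ maxVal n x :=
  le_sup (mem_univ i)

lemma exists_apply_eq_maxVal (hn : 0 < n) (x : Fin n → ℕ) : ∃ i, x i = maxVal n x := by
  obtain ⟨i, -, hi⟩ := exists_mem_eq_sup univ ⟨⟨0, hn⟩, mem_univ _⟩ x
  exact ⟨i, hi.symm⟩

lemma exists_mem_nub_apply_eq {v : ℕ} (h : ∃ i, x i = v) : ∃ i ∈ Nub n x, x i = v := by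
  obtain ⟨i, hi, hmin⟩ := wellFounded_lt.has_min {i | x i = v} h
  exact ⟨i, fun j hj hji => hmin j (hji.trans hi) hj, hi⟩

def countBefore (x : Fin n → ℕ) (m t : ℕ) : ℕ := #{j : Fin n | j.1 < t ∧ x j = m}

lemma countBefore_mono {s t : ℕ} (h : s ≤ t) : countBefore x m s ≤ countBefore x m t :=
  card_le_card fun j hj => by
    simp only [mem_filter, mem_univ, true_and] at hj ⊢
    exact ⟨by omega, hj.2⟩

lemma countBefore_lt_countBefore {s t : ℕ} {j : Fin n} (hj : x j = m) (hs : s ≤ j) (ht : j < t) :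
    countBefore x m s < countBefore x m t := by
  refine card_lt_card ((ssubset_iff_of_subset fun i hi => ?_).2 ⟨j, ?_, ?_⟩)
  all_goals simp only [mem_filter, mem_univ, true_and] at *
  · exact ⟨by omega, hi.2⟩
  · exact ⟨ht, hj⟩
  · omega

namespace IsRunSeq

variable (hx : IsRunSeq n m x)
include hx

lemma eq_of_apply_eq {i j : Fin n} (hij : x i = x j) (hi : x i < m) : i = j :=
  (hx.existsUnique _ (hx.one_le_apply i) hi).unique rfl hij.symm

lemma mem_nub_of_lt {i : Fin n} (hi : x i < m) : i ∈ Nub n x :=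
  fun _ hj hji => hj.ne (hx.eq_of_apply_eq hji.symm hi).symm

lemma apply_eq_of_val_add_one_eq {i : Fin n} (hi : i.1 + 1 = n) : x i = m := by
  by_contra h
  obtain ⟨hlt, -⟩ := hx.ascent i (lt_of_le_of_ne (hx.apply_le i) h)
  omega

lemma one_le (hn : 0 < n) : 1 ≤ m :=
  hx.apply_zero ⟨0, hn⟩ rfl ▸ hx.one_le_apply _

lemma maxVal_eq (hn : 0 < n) : maxVal n x = m :=
  le_antisymm (Finset.sup_le fun i _ => hx.apply_le i) (hx.apply_zero ⟨0, hn⟩ rfl ▸ le_maxVal x _)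

lemma avoids121 : Avoids121 n x := by
  rintro ⟨i, j, k, hij, hjk, hlt, heq⟩
  exact (hij.trans hjk).ne (hx.eq_of_apply_eq heq (hlt.trans_le (hx.apply_le j)))

lemma avoids211 : Avoids211 n x := by
  rintro ⟨i, j, k, -, hjk, hlt, heq⟩
  exact hjk.ne (hx.eq_of_apply_eq heq (hlt.trans_le (hx.apply_le i)))

-- `v : Fin (m - 1)` stands for the value `v + 1`.
noncomputable def pos (v : Fin (m - 1)) : Fin n :=
  (hx.existsUnique (v + 1) (by omega) (by omega)).exists.choose

lemma apply_pos (v : Fin (m - 1)) : x (hx.pos v) = v + 1 :=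
  (hx.existsUnique (v + 1) (by omega) (by omega)).exists.choose_spec

lemma pos_eq_of_apply_eq {v : Fin (m - 1)} {i : Fin n} (hi : x i = v + 1) : hx.pos v = i :=
  hx.eq_of_apply_eq ((hx.apply_pos v).trans hi.symm) (by rw [hx.apply_pos]; omega)

lemma pos_injective : Function.Injective hx.pos := fun w v h => by
  have := hx.apply_pos w
  rw [h, hx.apply_pos] at this
  exact Fin.ext (by omega)

lemma exists_pos_eq_iff (i : Fin n) : (∃ v, hx.pos v = i) ↔ x i ≠ m := by
  constructor
  · rintro ⟨v, rfl⟩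
    rw [hx.apply_pos]
    omega
  · intro h
    have := hx.one_le_apply i
    have := hx.apply_le i
    exact ⟨⟨x i - 1, by omega⟩, hx.pos_eq_of_apply_eq (by dsimp only; omega)⟩

lemma zero_lt_val_pos (v : Fin (m - 1)) : 0 < (hx.pos v).1 :=
  Nat.pos_of_ne_zero fun h => by
    have := hx.apply_zero _ h
    rw [hx.apply_pos] at this
    omega

-- Below `t`, the entries other than `m` are exactly the positions of the values `< m`.
lemma countBefore_add_card {t : ℕ} (ht : t ≤ n) :
    countBefore x m t + #{v | (hx.pos v).1 < t} = t := by
  have hsmall : map ⟨hx.pos, hx.pos_injective⟩ {v | (hx.pos v).1 < t} =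
      ({j : Fin n | j.1 < t ∧ ¬x j = m} : Finset (Fin n)) := by
    ext j
    simp only [mem_map, mem_filter, mem_univ, true_and, Function.Embedding.coeFn_mk]
    constructor
    · rintro ⟨v, hv, rfl⟩
      exact ⟨hv, (hx.exists_pos_eq_iff _).1 ⟨v, rfl⟩⟩
    · rintro ⟨hj, hm⟩
      obtain ⟨v, rfl⟩ := (hx.exists_pos_eq_iff j).2 hm
      exact ⟨v, hj, rfl⟩
  have hsplit := card_filter_add_card_filter_not
    (s := ({j : Fin n | j.1 < t} : Finset (Fin n))) (fun j => x j = m)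
  rwa [filter_filter, filter_filter, Fin.card_filter_val_lt, min_eq_right ht, ← hsmall,
    card_map] at hsplit

lemma countBefore_length_add : countBefore x m n + (m - 1) = n := by
  have := hx.countBefore_add_card le_rfl
  rwa [filter_true_of_mem fun v _ => (hx.pos v).2, card_univ, Fintype.card_fin] at this

lemma le_length (hn : 0 < n) : m ≤ n := by
  have := countBefore_lt_countBefore (j := ⟨0, hn⟩) (s := 0) (hx.apply_zero _ rfl) le_rfl hn
  have := hx.countBefore_length_add
  omega

lemma lt_length (hn : 2 ≤ n) : m < n := by
  have h0 := countBefore_lt_countBefore (j := ⟨0, by omega⟩) (s := 0) (hx.apply_zero _ rfl) le_rfl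
    (t := 1) Nat.one_pos
  have h1 := countBefore_lt_countBefore (j := ⟨n - 1, by omega⟩)
    (hx.apply_eq_of_val_add_one_eq (by dsimp only; omega)) (s := 1) (t := n) (by dsimp only; omega)
    (by dsimp only; omega)
  have := hx.countBefore_length_add
  have := hx.one_le (by omega)
  omega

lemma isRAS (hn : 0 < n) : IsRAS n x := by
  refine ⟨⟨fun i => ⟨hx.one_le_apply i, (hx.apply_le i).trans (hx.le_length hn)⟩,
    fun v hv hvm => ?_⟩, ?_⟩
  · rw [hx.maxVal_eq hn] at hvm
    rcases hvm.lt_or_eq with hlt | rfl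
    · exact (hx.existsUnique v hv hlt).exists
    · exact ⟨⟨0, hn⟩, hx.apply_zero _ rfl⟩
  · ext i
    constructor
    · rintro (h0 | ⟨h, hlt⟩)
      · exact fun j hj => absurd (Fin.lt_def.1 hj) (by omega)
      · exact hx.mem_nub_of_lt (hlt.trans_le (hx.apply_le _))
    · intro hi
      by_cases h0 : i.1 = 0
      · exact Or.inl h0
      · refine Or.inr (hx.ascent i (lt_of_le_of_ne (hx.apply_le i) fun him => ?_))
        exact hi ⟨0, hn⟩ (Fin.lt_def.2 (Nat.pos_of_ne_zero h0)) (by rw [hx.apply_zero _ rfl, him])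

end IsRunSeq

section Slot

variable {k l : ℕ} (g : Fin l → Fin k)

def rank (v : Fin l) : ℕ := #{w | toLex (g w, w) < toLex (g v, v)}

-- The position of `v + 1` in `fill g`: after `g v + 1` copies of `m` and all values of smaller
-- key `(g w, w)`.
def slot (v : Fin l) : ℕ := g v + 1 + rank g v

variable {g}

lemma rank_lt_rank {w v : Fin l} (h : toLex (g w, w) < toLex (g v, v)) :
    rank g w < rank g v := by
  refine card_lt_card ((ssubset_iff_of_subset fun u hu => ?_).2 ⟨w, ?_, ?_⟩)
  all_goals simp only [mem_filter, mem_univ, true_and] at *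
  · exact hu.trans h
  · exact h
  · exact lt_irrefl _

lemma rank_lt (v : Fin l) : rank g v < l := by
  have : rank g v < #(univ : Finset (Fin l)) :=
    card_lt_card (filter_ssubset.2 ⟨v, mem_univ v, lt_irrefl _⟩)
  rwa [card_univ, Fintype.card_fin] at this

lemma slot_lt (v : Fin l) : slot g v < k + l := by
  have := rank_lt (g := g) v
  have := (g v).2
  unfold slot
  omega

lemma slot_lt_slot {w v : Fin l} (h : toLex (g w, w) < toLex (g v, v)) :
    slot g w < slot g v := by
  have hg : g w ≤ g v := by
    rcases Prod.Lex.toLex_lt_toLex.1 h with h | ⟨h, -⟩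
    exacts [h.le, h.le]
  have := rank_lt_rank h
  have := Fin.le_def.1 hg
  unfold slot
  omega

lemma injective_toLex_pair : Function.Injective fun v : Fin l => toLex (g v, v) :=
  fun _ _ h => congrArg Prod.snd (toLex.injective h)

lemma slot_lt_slot_iff {w v : Fin l} :
    slot g w < slot g v ↔ toLex (g w, w) < toLex (g v, v) := by
  refine ⟨fun h => ?_, slot_lt_slot⟩
  rcases lt_trichotomy (toLex (g w, w)) (toLex (g v, v)) with hlt | heq | hgt
  · exact hlt
  · cases injective_toLex_pair heq
    exact absurd h (lt_irrefl _)
  · exact absurd (slot_lt_slot hgt) h.asymm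

lemma slot_injective : Function.Injective (slot g) := fun w v h => by
  rcases lt_trichotomy (toLex (g w, w)) (toLex (g v, v)) with hlt | heq | hgt
  · exact absurd h (slot_lt_slot hlt).ne
  · exact injective_toLex_pair heq
  · exact absurd h (slot_lt_slot hgt).ne'

-- Adjacent slots have equal `g`, since the slot grows with both `g` and the rank.
lemma lt_of_slot_eq_slot_add_one {w v : Fin l} (h : slot g w = slot g v + 1) : v < w := by
  have hlt := slot_lt_slot_iff.1 (show slot g v < slot g w by omega)
  rcases Prod.Lex.toLex_lt_toLex.1 hlt with hg | ⟨-, hvw⟩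
  · have := rank_lt_rank hlt
    have : (g v).1 < g w := hg
    unfold slot at h
    omega
  · exact hvw

end Slot

noncomputable def fill (g : Fin (m - 1) → Fin (n - m)) (i : Fin n) : ℕ :=
  if h : ∃ v, slot g v = i.1 then h.choose + 1 else m

lemma fill_eq_of_slot_eq {g : Fin (m - 1) → Fin (n - m)} {v : Fin (m - 1)} {i : Fin n}
    (hv : slot g v = i.1) : fill g i = v + 1 := by
  have h : ∃ v, slot g v = i.1 := ⟨v, hv⟩
  rw [fill, dif_pos h, slot_injective (h.choose_spec.trans hv.symm)]

lemma fill_cases (g : Fin (m - 1) → Fin (n - m)) (i : Fin n) :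
    (∃ v, slot g v = i.1 ∧ fill g i = v + 1) ∨ ((∀ v, slot g v ≠ i.1) ∧ fill g i = m) := by
  by_cases h : ∃ v, slot g v = i.1
  · obtain ⟨v, hv⟩ := h
    exact Or.inl ⟨v, hv, fill_eq_of_slot_eq hv⟩
  · exact Or.inr ⟨not_exists.1 h, dif_neg h⟩

lemma slot_add_one_lt (g : Fin (m - 1) → Fin (n - m)) (v : Fin (m - 1)) : slot g v + 1 < n := by
  have := slot_lt (g := g) v
  have := v.2
  have := (g v).2
  omega

lemma isRunSeq_fill (hm : 1 ≤ m) (g : Fin (m - 1) → Fin (n - m)) : IsRunSeq n m (fill g) where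
  one_le_apply i := by
    rcases fill_cases g i with ⟨v, -, hv⟩ | ⟨-, hm'⟩ <;> omega
  apply_le i := by
    rcases fill_cases g i with ⟨v, -, hv⟩ | ⟨-, hm'⟩
    · have := v.2
      omega
    · omega
  apply_zero i hi := by
    rcases fill_cases g i with ⟨v, hv, -⟩ | ⟨-, hm'⟩
    · unfold slot at hv
      omega
    · exact hm'
  existsUnique u hu hum := by
    let v : Fin (m - 1) := ⟨u - 1, by omega⟩
    refine ⟨⟨slot g v, by have := slot_add_one_lt g v; omega⟩,
      (fill_eq_of_slot_eq rfl).trans (by dsimp only [v]; omega), fun j hj => ?_⟩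
    rcases fill_cases g j with ⟨w, hw, hfw⟩ | ⟨-, hfm⟩
    · obtain rfl : w = v := Fin.ext (by dsimp only [v]; omega)
      exact Fin.ext hw.symm
    · omega
  ascent i hi := by
    rcases fill_cases g i with ⟨v, hv, hfv⟩ | ⟨-, hfm⟩
    swap
    · omega
    have hlt : i.1 + 1 < n := hv ▸ slot_add_one_lt g v
    refine ⟨hlt, ?_⟩
    rcases fill_cases g ⟨i.1 + 1, hlt⟩ with ⟨w, hw, hfw⟩ | ⟨-, hfm⟩
    · have := Fin.lt_def.1 (lt_of_slot_eq_slot_add_one (hw.trans (by rw [hv])))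
      omega
    · have := v.2
      omega

namespace IsRunSeq

variable (hx : IsRunSeq n m x)
include hx

lemma one_le_countBefore_pos (v : Fin (m - 1)) : 1 ≤ countBefore x m (hx.pos v) :=
  Nat.one_le_of_lt <| countBefore_lt_countBefore (s := 0) (j := ⟨0, (hx.pos v).pos⟩)
    (hx.apply_zero _ rfl) le_rfl (hx.zero_lt_val_pos v)

lemma countBefore_pos_le (v : Fin (m - 1)) : countBefore x m (hx.pos v) ≤ n - m := by
  have := (hx.pos v).2
  have := countBefore_lt_countBefore (s := hx.pos v) (t := n) (j := ⟨n - 1, by omega⟩)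
    (hx.apply_eq_of_val_add_one_eq (by dsimp only; omega)) (by dsimp only; omega)
    (by dsimp only; omega)
  have := hx.countBefore_length_add
  omega

-- The run, between two consecutive `m`s, that contains the value `v + 1`.
noncomputable def gap (v : Fin (m - 1)) : Fin (n - m) :=
  ⟨countBefore x m (hx.pos v) - 1, by
    have := hx.one_le_countBefore_pos v
    have := hx.countBefore_pos_le v
    omega⟩

lemma gap_add_one (v : Fin (m - 1)) : (hx.gap v).1 + 1 = countBefore x m (hx.pos v) :=
  Nat.sub_add_cancel (hx.one_le_countBefore_pos v)

lemma apply_lt_apply_of_forall_lt {i j : Fin n} (hij : i < j)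
    (h : ∀ t : Fin n, i ≤ t → t < j → x t < m) : x i < x j := by
  obtain ⟨d, hd⟩ : ∃ d, j.1 = i.1 + d + 1 := ⟨j.1 - i.1 - 1, by have := Fin.lt_def.1 hij; omega⟩
  induction d generalizing i with
  | zero =>
    obtain ⟨hi, hlt⟩ := hx.ascent i (h i le_rfl hij)
    rwa [show j = ⟨i.1 + 1, hi⟩ from Fin.ext hd]
  | succ d ih =>
    obtain ⟨hi, hlt⟩ := hx.ascent i (h i le_rfl hij)
    refine hlt.trans (ih (Fin.lt_def.2 (by dsimp only; omega)) (fun t ht1 ht2 => ?_)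
      (by dsimp only; omega))
    exact h t (le_trans (Fin.le_def.2 (by dsimp only; omega)) ht1) ht2

lemma toLex_lt_of_pos_lt {w v : Fin (m - 1)} (h : hx.pos w < hx.pos v) :
    toLex (hx.gap w, w) < toLex (hx.gap v, v) := by
  rw [Prod.Lex.toLex_lt_toLex]
  dsimp only
  have hw := hx.gap_add_one w
  have hv := hx.gap_add_one v
  rcases (countBefore_mono (x := x) (m := m) (Fin.le_def.1 h.le)).lt_or_eq with hlt | heq
  · exact Or.inl (Fin.lt_def.2 (by omega))
  · refine Or.inr ⟨Fin.ext (by omega), ?_⟩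
    -- No `m` lies between the two positions, so they are in one increasing run.
    have hrun : ∀ t : Fin n, hx.pos w ≤ t → t < hx.pos v → x t < m := fun t h1 h2 =>
      (hx.apply_le t).lt_of_ne fun ht =>
        (countBefore_lt_countBefore ht (Fin.le_def.1 h1) (Fin.lt_def.1 h2)).ne heq
    have := hx.apply_lt_apply_of_forall_lt h hrun
    rw [hx.apply_pos, hx.apply_pos] at this
    exact Fin.lt_def.2 (by omega)

lemma pos_lt_pos_iff {w v : Fin (m - 1)} :
    hx.pos w < hx.pos v ↔ toLex (hx.gap w, w) < toLex (hx.gap v, v) := by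
  refine ⟨hx.toLex_lt_of_pos_lt, fun h => ?_⟩
  rcases lt_trichotomy (hx.pos w) (hx.pos v) with hlt | heq | hgt
  · exact hlt
  · cases hx.pos_injective heq
    exact absurd h (lt_irrefl _)
  · exact absurd (hx.toLex_lt_of_pos_lt hgt) h.asymm

lemma val_pos_eq_slot (v : Fin (m - 1)) : (hx.pos v).1 = slot hx.gap v := by
  have hsplit := hx.countBefore_add_card (hx.pos v).2.le
  have hrank : #{w | (hx.pos w).1 < (hx.pos v).1} = rank hx.gap v := by
    refine congrArg card (filter_congr fun w _ => ?_)
    rw [← Fin.lt_def, hx.pos_lt_pos_iff]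
  rw [slot, hx.gap_add_one]
  omega

lemma fill_gap : fill hx.gap = x := by
  funext i
  rcases fill_cases hx.gap i with ⟨v, hv, hfv⟩ | ⟨hne, hfm⟩
  · rw [hfv, ← hx.apply_pos v, Fin.ext ((hx.val_pos_eq_slot v).trans hv)]
  · rw [hfm]
    by_contra h
    obtain ⟨v, rfl⟩ := (hx.exists_pos_eq_iff i).2 (Ne.symm h)
    exact hne v (hx.val_pos_eq_slot v).symm

end IsRunSeq

lemma IsRunSeq.gap_fill {g : Fin (m - 1) → Fin (n - m)} (hy : IsRunSeq n m (fill g)) :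
    hy.gap = g := by
  have hpos (v : Fin (m - 1)) : (hy.pos v).1 = slot g v :=
    congrArg Fin.val (hy.pos_eq_of_apply_eq (i := ⟨slot g v, by have := slot_add_one_lt g v; omega⟩)
      (fill_eq_of_slot_eq rfl))
  funext v
  have hsplit := hy.countBefore_add_card (hy.pos v).2.le
  have hrank : #{w | (hy.pos w).1 < (hy.pos v).1} = rank g v := by
    refine congrArg card (filter_congr fun w _ => ?_)
    rw [hpos, hpos, slot_lt_slot_iff]
  have := hy.gap_add_one v
  have := hpos v
  unfold slot at this
  exact Fin.ext (by omega)

noncomputable def isRunSeqEquiv (hm : 1 ≤ m) :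
    {x : Fin n → ℕ // IsRunSeq n m x} ≃ (Fin (m - 1) → Fin (n - m)) where
  toFun x := x.2.gap
  invFun g := ⟨fill g, isRunSeq_fill hm g⟩
  left_inv x := Subtype.ext x.2.fill_gap
  right_inv g := (isRunSeq_fill hm g).gap_fill

lemma ncard_setOf_isRunSeq (hm : 1 ≤ m) :
    {x : Fin n → ℕ | IsRunSeq n m x}.ncard = (n - m) ^ (m - 1) := by
  rw [← Nat.card_coe_set_eq, Set.coe_ofPred, Nat.card_congr (isRunSeqEquiv hm), Nat.card_fun]
  simp

lemma finite_setOf_isRunSeq (hm : 1 ≤ m) : {x : Fin n → ℕ | IsRunSeq n m x}.Finite :=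
  Set.finite_coe_iff.1 (Finite.of_equiv _ (isRunSeqEquiv hm).symm)

namespace IsRAS

lemma ascent_of_mem_nub (hx : IsRAS n x) {i : Fin n} (hi : i ∈ Nub n x) (h0 : i.1 ≠ 0) :
    ∃ h : i.1 + 1 < n, x i < x ⟨i.1 + 1, h⟩ := by
  rw [← hx.2] at hi
  exact hi.resolve_left h0

lemma apply_eq_maxVal (hx : IsRAS n x) {i : Fin n} (hi : i.1 = 0) : x i = maxVal n x := by
  obtain ⟨p, hp, hpx⟩ := exists_mem_nub_apply_eq (exists_apply_eq_maxVal (by omega) x)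
  by_cases hp0 : p.1 = 0
  · rwa [Fin.ext (hi.trans hp0.symm)]
  · obtain ⟨h, hlt⟩ := hx.ascent_of_mem_nub hp hp0
    exact absurd (le_maxVal x ⟨p.1 + 1, h⟩) (by omega)

lemma isRunSeq_of_existsUnique (hx : IsRAS n x)
    (hu : ∀ v, 1 ≤ v → v < maxVal n x → ∃! i, x i = v) : IsRunSeq n (maxVal n x) x where
  one_le_apply i := (hx.1.1 i).1
  apply_le := le_maxVal x
  apply_zero _ := hx.apply_eq_maxVal
  existsUnique := hu
  ascent i hi := by
    refine hx.ascent_of_mem_nub (fun j hj hji => ?_) (fun h0 => ?_)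
    · exact hj.ne ((hu _ (hx.1.1 i).1 hi).unique hji rfl)
    · exact hi.ne (hx.apply_eq_maxVal h0)

lemma existsUnique_of_avoids121 (hx : IsRAS n x) (ha : Avoids121 n x) {v : ℕ} (hv : 1 ≤ v)
    (hvm : v < maxVal n x) : ∃! i, x i = v := by
  obtain ⟨p, hp, hpv⟩ := exists_mem_nub_apply_eq (hx.1.2 v hv hvm.le)
  obtain ⟨h, hlt⟩ := hx.ascent_of_mem_nub hp fun h0 => by
    have := hx.apply_eq_maxVal h0; omega
  refine ⟨p, hpv, fun q hq => ?_⟩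
  have hpq : p ≤ q := not_lt.1 fun hqp => hp q hqp (hq.trans hpv.symm)
  by_contra hqp
  have hq1 : p.1 + 1 ≠ q.1 := fun he => by
    rw [show q = ⟨p.1 + 1, h⟩ from Fin.ext he.symm] at hq; omega
  have hpq' : p.1 ≠ q.1 := fun he => hqp (Fin.ext he.symm)
  exact ha ⟨p, ⟨p.1 + 1, h⟩, q, Fin.lt_def.2 (by simp), Fin.lt_def.2 (by simp; omega),
    by omega, by omega⟩

lemma existsUnique_of_avoids211 (hx : IsRAS n x) (ha : Avoids211 n x) {v : ℕ} (hv : 1 ≤ v)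
    (hvm : v < maxVal n x) : ∃! i, x i = v := by
  obtain ⟨i, hi⟩ := hx.1.2 v hv hvm.le
  have hpos : ∀ j : Fin n, x j = v → (⟨0, i.pos⟩ : Fin n) < j := fun j hj =>
    Fin.lt_def.2 (Nat.pos_of_ne_zero fun h0 => by have := hx.apply_eq_maxVal h0; omega)
  have hz : x ⟨0, i.pos⟩ = maxVal n x := hx.apply_eq_maxVal rfl
  refine ⟨i, hi, fun j hj => ?_⟩
  rcases lt_trichotomy j i with hji | rfl | hij
  · exact absurd ⟨_, j, i, hpos j hj, hji, by rw [hz]; omega, hj.trans hi.symm⟩ ha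
  · rfl
  · exact absurd ⟨_, i, j, hpos i hi, hij, by rw [hz]; omega, hi.trans hj.symm⟩ ha

lemma avoids121_iff_avoids211 (hx : IsRAS n x) : Avoids121 n x ↔ Avoids211 n x :=
  ⟨fun ha => (hx.isRunSeq_of_existsUnique fun _ => hx.existsUnique_of_avoids121 ha).avoids211,
    fun ha => (hx.isRunSeq_of_existsUnique fun _ => hx.existsUnique_of_avoids211 ha).avoids121⟩

end IsRAS

lemma setOf_isRAS_and_avoids121 (hn : 2 ≤ n) :
    {x : Fin n → ℕ | IsRAS n x ∧ Avoids121 n x} =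
      ⋃ m ∈ Set.Icc 1 (n - 1), {x | IsRunSeq n m x} := by
  ext x
  simp only [Set.mem_ofPred_eq, Set.mem_iUnion, Set.mem_Icc, exists_prop]
  constructor
  · rintro ⟨hx, ha⟩
    have hr := hx.isRunSeq_of_existsUnique fun _ => hx.existsUnique_of_avoids121 ha
    exact ⟨_, ⟨hr.one_le (by omega), Nat.le_sub_one_of_lt (hr.lt_length hn)⟩, hr⟩
  · rintro ⟨m, -, hr⟩
    exact ⟨hr.isRAS (by omega), hr.avoids121⟩

lemma sum_Icc_sub_pow (n : ℕ) :
    ∑ m ∈ Icc 1 (n - 1), (n - m) ^ (m - 1) = ∑ k ∈ Icc 1 (n - 1), k ^ (n - k - 1) := by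
  refine sum_nbij' (n - ·) (n - ·) ?_ ?_ ?_ ?_ ?_ <;> intro a ha <;> simp only [mem_Icc] at ha ⊢
  iterate 4 omega
  congr 1
  omega

theorem stmt17 (n : ℕ) (hn : 2 ≤ n) :
    (∀ x : Fin n → ℕ, IsRAS n x → (Avoids121 n x ↔ Avoids211 n x)) ∧
    {x : Fin n → ℕ | IsRAS n x ∧ Avoids121 n x}.ncard =
      ∑ k ∈ Finset.Icc 1 (n - 1), k ^ (n - k - 1) := by
  refine ⟨fun x hx => hx.avoids121_iff_avoids211, ?_⟩
  have hdisj : (Set.Icc 1 (n - 1)).PairwiseDisjoint fun m => {x : Fin n → ℕ | IsRunSeq n m x} :=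
    fun a _ b _ hab => Set.disjoint_left.2 fun x ha hb =>
      hab ((ha.maxVal_eq (by omega)).symm.trans (hb.maxVal_eq (by omega)))
  rw [setOf_isRAS_and_avoids121 hn, (Set.finite_Icc 1 (n - 1)).ncard_biUnion
    (fun m hm => finite_setOf_isRunSeq hm.1) hdisj, ← coe_Icc, finsum_mem_coe_finset,
    ← sum_Icc_sub_pow]
  exact sum_congr rfl fun m hm => ncard_setOf_isRunSeq (mem_Icc.1 hm).1
end
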